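/- arXiv:2211.02433 — 6 statements merged into one kernel-verified Lean document; each statement's English description precedes it below -/
import Mathlib

section
/- Let n ≥ 1 be an integer, T a topological space, and τ : T → M_n(ℝ) a continuous map such that τ(t)^⊤ = −τ(t) for all t ∈ T and there exists an integer k ≥ 1 with dim Ker τ(t) = k for all t ∈ T. Then the map T → Gr_k(ℝ^n), t ↦ Ker τ(t), is continuous. -/
open Module Filter Topology

noncomputable section

variable {𝕜 : Type} [RCLike 𝕜]

noncomputable instance grassmannianTopology {V : Type} [NormedAddCommGroup V]
    [InnerProductSpace 𝕜 V] [FiniteDimensional 𝕜 V] : TopologicalSpace (Submodule 𝕜 V) :=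
  TopologicalSpace.induced
    (fun W : Submodule 𝕜 V => (W.subtypeL.comp (W.orthogonalProjectionOnto) : V →L[𝕜] V))
    inferInstance

variable {V : Type} [NormedAddCommGroup V] [InnerProductSpace 𝕜 V] [FiniteDimensional 𝕜 V]

/-- `B` is a skew-symmetric bilinear form. -/
def IsSkew (B : V →L[𝕜] V →L[𝕜] 𝕜) : Prop := ∀ x y, B x y = - B y x

/-- `S^{⊥_B}`. -/
def perpB (B : V →L[𝕜] V →L[𝕜] 𝕜) (S : Submodule 𝕜 V) : Submodule 𝕜 V where
  carrier := {w | ∀ v ∈ S, B v w = 0}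
  add_mem' := by
    intro a b ha hb v hv
    simp [map_add, ha v hv, hb v hv]
  zero_mem' := by
    intro v hv
    simp
  smul_mem' := by
    intro c w hw v hv
    simp [hw v hv]

/-- The null space `N(B)`. -/
def nullSpace (B : V →L[𝕜] V →L[𝕜] 𝕜) : Submodule 𝕜 V := perpB B ⊤

/-- `S ⊥_B T`. -/
def IsOrthoPair (B : V →L[𝕜] V →L[𝕜] 𝕜) (S T : Submodule 𝕜 V) : Prop :=
  ∀ v ∈ S, ∀ w ∈ T, B v w = 0

/-- `W` is a `B`-isotropic subspace. -/
def IsIsotropic (B : V →L[𝕜] V →L[𝕜] 𝕜) (W : Submodule 𝕜 V) : Prop := IsOrthoPair B W W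


local notation "⟪" x ", " y "⟫" => @inner ℝ _ _ x y

open ContinuousLinearMap in
lemma skewProj_key {E : Type} [NormedAddCommGroup E] [InnerProductSpace ℝ E]
    [FiniteDimensional ℝ E] {T : Type} [TopologicalSpace T]
    (A : T → E →L[ℝ] E) (hA : Continuous A)
    (hadj : ∀ t, ContinuousLinearMap.adjoint (A t) = - A t)
    (k : ℕ) (hker : ∀ t, finrank ℝ (LinearMap.ker (A t : E →ₗ[ℝ] E)) = k) :
    Continuous fun t => ((LinearMap.ker (A t : E →ₗ[ℝ] E)).subtypeL.comp
      (Submodule.orthogonalProjectionOnto (LinearMap.ker (A t : E →ₗ[ℝ] E))) : E →L[ℝ] E) := by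
  set pr : Submodule ℝ E → (E →L[ℝ] E) :=
    fun W => (W.subtypeL.comp (W.orthogonalProjectionOnto) : E →L[ℝ] E) with hpr
  set K : T → Submodule ℝ E := fun t => LinearMap.ker (A t : E →ₗ[ℝ] E) with hK
  -- basic facts about pr
  have pr_apply : ∀ (W : Submodule ℝ E) (v : E), pr W v = (W.orthogonalProjectionOnto v : E) :=
    fun W v => rfl
  have pr_mem : ∀ (W : Submodule ℝ E) (v : E), pr W v ∈ W := fun W v => (W.orthogonalProjectionOnto v).2
  have pr_eq_self : ∀ (W : Submodule ℝ E) (v : E), v ∈ W → pr W v = v := by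
    intro W v hv
    rw [pr_apply]
    exact Submodule.starProjection_eq_self_iff.mpr hv
  have pr_eq_zero : ∀ (W : Submodule ℝ E) (v : E), v ∈ Wᗮ → pr W v = 0 := by
    intro W v hv
    rw [pr_apply]
    rw [Submodule.orthogonalProjectionOnto_apply_of_mem_orthogonal hv]
    simp
  have pr_sa : ∀ W : Submodule ℝ E, star (pr W) = pr W := fun W =>
    isSelfAdjoint_starProjection W
  have pr_idem : ∀ W : Submodule ℝ E, pr W * pr W = pr W := by
    intro W
    ext v
    exact pr_eq_self W _ (pr_mem W v)
  rw [continuous_iff_continuousAt]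
  intro t₀
  set P : E →L[ℝ] E := pr (K t₀) with hP
  set B : T → E →L[ℝ] E := fun t => A t * (1 - P) with hB
  set M : T → E →L[ℝ] E := fun t => ContinuousLinearMap.adjoint (B t) * B t + P with hM
  have hBP : ∀ t, B t * P = 0 := by
    intro t
    have : (1 - P) * P = 0 := by rw [sub_mul, one_mul, pr_idem, sub_self]
    rw [hB]
    simp only []
    rw [mul_assoc, this, mul_zero]
  have hMP : ∀ t, M t * P = P := by
    intro t
    rw [hM]
    simp only []
    rw [add_mul, mul_assoc, hBP, mul_zero, zero_add, pr_idem]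
  have hMsa : ∀ t, star (M t) = M t := by
    intro t
    rw [hM]
    simp only []
    rw [star_add, star_mul, star_eq_adjoint, star_eq_adjoint, adjoint_adjoint, pr_sa]
  -- inner product positivity facts
  have hinner : ∀ (t : T) (v : E), ⟪v, M t v⟫ = ⟪B t v, B t v⟫ + ⟪P v, P v⟫ := by
    intro t v
    rw [hM]
    simp only [ContinuousLinearMap.add_apply, ContinuousLinearMap.mul_apply]
    rw [inner_add_right, adjoint_inner_right]
    congr 1
    calc ⟪v, P v⟫ = ⟪v, P (P v)⟫ := by rw [← ContinuousLinearMap.mul_apply, pr_idem]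
    _ = ⟪ContinuousLinearMap.adjoint P v, P v⟫ := by rw [adjoint_inner_left]
    _ = ⟪P v, P v⟫ := by rw [← star_eq_adjoint, pr_sa]
  have hMker : ∀ (t : T) (v : E), M t v = 0 → B t v = 0 ∧ P v = 0 := by
    intro t v hv
    have h0 : ⟪B t v, B t v⟫ + ⟪P v, P v⟫ = 0 := by rw [← hinner, hv, inner_zero_right]
    have h1 : ⟪B t v, B t v⟫ = 0 ∧ ⟪P v, P v⟫ = 0 := by
      constructor <;> nlinarith [real_inner_self_nonneg (x := B t v),
        real_inner_self_nonneg (x := P v)]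
    exact ⟨inner_self_eq_zero.mp h1.1, inner_self_eq_zero.mp h1.2⟩
  -- M t₀ is a unit
  have hMinj : Function.Injective (M t₀) := by
    intro v w hvw
    have hv : M t₀ (v - w) = 0 := by rw [map_sub, hvw, sub_self]
    obtain ⟨hB0, hP0⟩ := hMker t₀ (v - w) hv
    have hBv : A t₀ (v - w) = 0 := by
      have : B t₀ (v - w) = A t₀ ((v - w) - P (v - w)) := by
        rw [hB]; simp [ContinuousLinearMap.mul_apply, ContinuousLinearMap.sub_apply]
      rw [this, hP0, sub_zero] at hB0
      exact hB0
    have hmem : v - w ∈ K t₀ := LinearMap.mem_ker.mpr hBv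
    have : v - w = 0 := by rw [← pr_eq_self (K t₀) _ hmem, hP0]
    exact sub_eq_zero.mp this
  have hMunit : IsUnit (M t₀) := by
    have hbij : Function.Bijective (M t₀) := by
      refine ⟨hMinj, ?_⟩
      have := LinearMap.injective_iff_surjective (f := (M t₀ : E →ₗ[ℝ] E))
      exact this.mp hMinj
    let e : E ≃L[ℝ] E := (LinearEquiv.ofBijective (M t₀ : E →ₗ[ℝ] E) hbij).toContinuousLinearEquiv
    refine ⟨⟨M t₀, (e.symm : E →L[ℝ] E), ?_, ?_⟩, rfl⟩
    · ext v; exact e.apply_symm_apply v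
    · ext v; exact e.symm_apply_apply v
  -- continuity of M
  have hBcont : Continuous B := hA.mul continuous_const
  have hBadj_cont : Continuous fun t => ContinuousLinearMap.adjoint (B t) :=
    (ContinuousLinearMap.adjoint (E := E) (F := E)).continuous.comp hBcont
  have hMcont : Continuous M := ((hBadj_cont.mul hBcont).add continuous_const)
  -- the set where M is a unit is a neighborhood of t₀
  have hnhds : {t | IsUnit (M t)} ∈ 𝓝 t₀ := by
    have : IsOpen {t | IsUnit (M t)} := Units.isOpen.preimage hMcont
    exact this.mem_nhds hMunit
  -- the candidate continuous formula
  set Φ : T → E →L[ℝ] E :=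
    fun t => 1 - B t * Ring.inverse (M t) * ContinuousLinearMap.adjoint (B t) with hΦ
  have hΦcont : ContinuousAt Φ t₀ := by
    have hinv : ContinuousAt (fun t => Ring.inverse (M t)) t₀ := by
      have h := NormedRing.inverse_continuousAt hMunit.unit
      rw [IsUnit.unit_spec] at h
      exact h.comp hMcont.continuousAt
    exact (continuousAt_const.sub
      (((hBcont.continuousAt.mul hinv).mul hBadj_cont.continuousAt)))
  -- eventual equality
  have hEq : (fun t => pr (K t)) =ᶠ[𝓝 t₀] Φ := by
    filter_upwards [hnhds] with t ht
    set Prj : E →L[ℝ] E := B t * Ring.inverse (M t) * ContinuousLinearMap.adjoint (B t) with hPrj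
    have hinvM : Ring.inverse (M t) * M t = 1 := Ring.inverse_mul_cancel _ ht
    have hMinj' : Function.Injective (M t) := by
      intro v w hvw
      have : Ring.inverse (M t) (M t v) = Ring.inverse (M t) (M t w) := by rw [hvw]
      rwa [← ContinuousLinearMap.mul_apply, ← ContinuousLinearMap.mul_apply, hinvM,
        ContinuousLinearMap.one_apply, ContinuousLinearMap.one_apply] at this
    -- adjoint B t * B t = M t - P
    have hadjBB : ContinuousLinearMap.adjoint (B t) * B t = M t - P := by
      rw [hM]; simp only []; rw [add_sub_cancel_right]
    -- Prj (B t v) = B t v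
    have hPrjB : ∀ v, Prj (B t v) = B t v := by
      intro v
      have h1 : ContinuousLinearMap.adjoint (B t) (B t v) = M t (v - P v) := by
        rw [← ContinuousLinearMap.mul_apply, hadjBB]
        simp only [ContinuousLinearMap.sub_apply, map_sub]
        have : M t (P v) = P v := by rw [← ContinuousLinearMap.mul_apply, hMP]
        rw [this]
      have h2 : Ring.inverse (M t) (ContinuousLinearMap.adjoint (B t) (B t v)) = v - P v := by
        rw [h1, ← ContinuousLinearMap.mul_apply, hinvM, ContinuousLinearMap.one_apply]
      rw [hPrj]
      simp only [ContinuousLinearMap.mul_apply]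
      rw [h2, map_sub]
      have : B t (P v) = 0 := by rw [← ContinuousLinearMap.mul_apply, hBP]; rfl
      rw [this, sub_zero]
    have hPrjrange : ∀ v, Prj v = B t (Ring.inverse (M t) (ContinuousLinearMap.adjoint (B t) v)) := by
      intro v; rw [hPrj]; simp [ContinuousLinearMap.mul_apply]
    have hPrjidem : ∀ v, Prj (Prj v) = Prj v := by
      intro v
      rw [hPrjrange v]
      exact hPrjB _
    have hstarinv : star (Ring.inverse (M t)) = Ring.inverse (M t) := by
      rw [← Ring.inverse_star, hMsa]
    have hPrjsa : star Prj = Prj := by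
      have h1 : star (ContinuousLinearMap.adjoint (B t)) = B t := by
        rw [← star_eq_adjoint, star_star]
      have h2 : star (B t) = ContinuousLinearMap.adjoint (B t) := star_eq_adjoint ..
      rw [hPrj, star_mul, star_mul, h1, h2, hstarinv, ← mul_assoc]
    -- range B t ⊆ (K t)ᗮ
    have hBmemOrth : ∀ x, B t x ∈ (K t)ᗮ := by
      intro x
      rw [Submodule.mem_orthogonal]
      intro u hu
      have hux : B t x = A t ((1 - P) x) := rfl
      rw [hux, ← adjoint_inner_left, hadj t]
      have : A t u = 0 := LinearMap.mem_ker.mp hu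
      simp [this]
    -- dimension count: (K t)ᗮ = range (B t)
    have hn' : finrank ℝ (K t)ᗮ = finrank ℝ E - k := by
      have := Submodule.finrank_add_finrank_orthogonal (K := K t)
      have hkt : finrank ℝ (K t) = k := hker t
      omega
    have hn0 : finrank ℝ (K t₀)ᗮ = finrank ℝ E - k := by
      have := Submodule.finrank_add_finrank_orthogonal (K := K t₀)
      have hkt : finrank ℝ (K t₀) = k := hker t₀
      omega
    have hrange : LinearMap.range (B t : E →ₗ[ℝ] E) = (K t)ᗮ := by
      have hle : LinearMap.range (B t : E →ₗ[ℝ] E) ≤ (K t)ᗮ := by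
        rintro x ⟨y, rfl⟩
        exact hBmemOrth y
      refine Submodule.eq_of_le_of_finrank_le hle ?_
      -- finrank (K t)ᗮ ≤ finrank range (B t)
      have hinj : Function.Injective
          (((B t : E →ₗ[ℝ] E).comp (K t₀)ᗮ.subtype).codRestrict
            (LinearMap.range (B t : E →ₗ[ℝ] E)) (fun v => LinearMap.mem_range_self _ _)) := by
        intro v w hvw
        have hvw' : B t (v : E) = B t (w : E) := congrArg Subtype.val hvw
        have h0 : B t ((v : E) - w) = 0 := by rw [map_sub, hvw', sub_self]
        have hMvw : M t ((v : E) - w) = 0 := by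
          rw [hM]
          simp only [ContinuousLinearMap.add_apply, ContinuousLinearMap.mul_apply, h0, map_zero,
            zero_add]
          exact pr_eq_zero _ _ (Submodule.sub_mem _ v.2 w.2)
        have : (v : E) - w = 0 := hMinj' (by rw [hMvw, map_zero])
        exact Subtype.ext (sub_eq_zero.mp this)
      have hfr : finrank ℝ (K t₀)ᗮ ≤ finrank ℝ (LinearMap.range (B t : E →ₗ[ℝ] E)) :=
        LinearMap.finrank_le_finrank_of_injective hinj
      calc finrank ℝ (K t)ᗮ = finrank ℝ (K t₀)ᗮ := by rw [hn', hn0]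
      _ ≤ finrank ℝ (LinearMap.range (B t : E →ₗ[ℝ] E)) := hfr
      _ = finrank ℝ (LinearMap.range (B t : E →ₗ[ℝ] E)) := rfl
    -- final: pr (K t) = Φ t
    show pr (K t) = Φ t
    ext v
    have hPrjv_mem : Prj v ∈ (K t)ᗮ := by rw [hPrjrange]; exact hBmemOrth _
    have hsub_mem : v - Prj v ∈ K t := by
      have hmem : v - Prj v ∈ (LinearMap.range (B t : E →ₗ[ℝ] E))ᗮ := by
        rw [Submodule.mem_orthogonal]
        rintro x ⟨y, rfl⟩
        calc ⟪B t y, v - Prj v⟫ = ⟪Prj (B t y), v - Prj v⟫ := by rw [hPrjB]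
        _ = ⟪B t y, Prj (v - Prj v)⟫ := by
            rw [← adjoint_inner_left, ← star_eq_adjoint, hPrjsa]
        _ = 0 := by rw [map_sub, hPrjidem, sub_self, inner_zero_right]
      rw [hrange] at hmem
      rwa [Submodule.orthogonal_orthogonal] at hmem
    have := Submodule.eq_starProjection_of_mem_orthogonal' (K := K t)
      (u := v) (v := v - Prj v) (z := Prj v) hsub_mem hPrjv_mem (by abel)
    calc pr (K t) v = ((K t).orthogonalProjectionOnto v : E) := pr_apply _ _
    _ = v - Prj v := this
    _ = Φ t v := by
        rw [hΦ]
        simp only [ContinuousLinearMap.sub_apply, ContinuousLinearMap.one_apply]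
        rfl
  exact (hΦcont.congr hEq.symm)

open Matrix in
/-- If `τ : T → Mₙ(ℝ)` is continuous with `τ(t)ᵀ = -τ(t)` and
`dim Ker τ(t) = k ≥ 1` for all `t`, then `t ↦ Ker τ(t)` is continuous into the
Grassmannian `Gr_k(ℝⁿ)` of `k`-dimensional subspaces. -/
theorem continuous_kernel_of_skew_matrices
    {n : ℕ} (hn : 1 ≤ n) {T : Type} [TopologicalSpace T]
    (τ : T → Matrix (Fin n) (Fin n) ℝ) (hτ : Continuous τ)
    (hskew : ∀ t, (τ t)ᵀ = -(τ t))
    (k : ℕ) (hk : 1 ≤ k)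
    (hker : ∀ t, finrank ℝ (LinearMap.ker (Matrix.toEuclideanLin (τ t))) = k) :
    Continuous (fun t =>
      (⟨LinearMap.ker (Matrix.toEuclideanLin (τ t)), hker t⟩ :
        {W : Submodule ℝ (EuclideanSpace ℝ (Fin n)) // finrank ℝ W = k})) := by
  set E := EuclideanSpace ℝ (Fin n)
  let A : T → E →L[ℝ] E := fun t => Matrix.toEuclideanCLM (𝕜 := ℝ) (τ t)
  have hKA : ∀ t, LinearMap.ker (Matrix.toEuclideanLin (τ t)) = LinearMap.ker (A t : E →ₗ[ℝ] E) := fun t => rfl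
  have hAcont : Continuous A := by
    have h2 : Continuous (fun M : Matrix (Fin n) (Fin n) ℝ =>
        Matrix.toEuclideanCLM (𝕜 := ℝ) M) :=
      LinearMap.continuous_of_finiteDimensional
        ({ toFun := fun M => Matrix.toEuclideanCLM (𝕜 := ℝ) M,
           map_add' := fun x y => map_add _ x y,
           map_smul' := fun c x => map_smul _ c x } : Matrix (Fin n) (Fin n) ℝ →ₗ[ℝ] (E →L[ℝ] E))
    exact h2.comp hτ
  have hAadj : ∀ t, ContinuousLinearMap.adjoint (A t) = - A t := by
    intro t
    have h1 : star (τ t) = -(τ t) := by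
      rw [Matrix.star_eq_conjTranspose, ← hskew t]
      ext i j
      simp [Matrix.conjTranspose_apply]
    rw [← ContinuousLinearMap.star_eq_adjoint]
    calc star (A t) = Matrix.toEuclideanCLM (𝕜 := ℝ) (star (τ t)) := (map_star _ _).symm
    _ = - A t := by rw [h1, map_neg]
  have key := skewProj_key A hAcont hAadj k (fun t => by rw [← hKA]; exact hker t)
  simp only [hKA]
  exact continuous_induced_rng.mpr (continuous_induced_rng.mpr key)
end
end

section
/- Let K ∈ {ℝ, ℂ} and V a K-vector space with n := dim_K V < ∞. For every k ∈ {0, 1, …, n}, the null-space mapping (∧²V)*_k → Gr_k(V), B ↦ N(B), is continuous, where (∧²V)*_k := {B ∈ (∧²V)* : dim N(B) = k}. -/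
open Module Filter Topology

noncomputable section

variable {𝕜 : Type} [RCLike 𝕜]

variable {V : Type} [NormedAddCommGroup V] [InnerProductSpace 𝕜 V] [FiniteDimensional 𝕜 V]

/-! ### Auxiliary material for Statement 5 -/

section NullAux

local notation "⟪" x ", " y "⟫" => @inner 𝕜 _ _ x y

variable {W : Type} [NormedAddCommGroup W] [InnerProductSpace 𝕜 W] [FiniteDimensional 𝕜 W]

omit [FiniteDimensional 𝕜 V] in
lemma isUnit_of_injective' (f : W →L[𝕜] W) (hf : Function.Injective f) : IsUnit f := by
  let e := LinearEquiv.ofInjectiveEndo (f : W →ₗ[𝕜] W) hf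
  let E := e.toContinuousLinearEquiv
  refine ⟨E.toUnit, ?_⟩
  ext x
  show E x = f x
  have : ⇑E = ⇑e := e.coe_toContinuousLinearEquiv'
  rw [this]; rfl

omit [FiniteDimensional 𝕜 V] in
lemma isUnit_adjoint_comp [CompleteSpace V] [CompleteSpace W] (A : W →L[𝕜] V)
    (hA : Function.Injective A) :
    IsUnit ((ContinuousLinearMap.adjoint A).comp A) := by
  apply isUnit_of_injective'
  intro x y hxy
  apply hA
  have h0 : ((ContinuousLinearMap.adjoint A).comp A) (x - y) = 0 := by
    simp [map_sub, hxy]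
  have h1 : ⟪((ContinuousLinearMap.adjoint A).comp A) (x-y), x-y⟫ = 0 := by rw [h0]; simp
  rw [ContinuousLinearMap.comp_apply, ContinuousLinearMap.adjoint_inner_left] at h1
  have := inner_self_eq_zero.mp h1
  rw [← sub_eq_zero, ← map_sub]
  exact this

omit [FiniteDimensional 𝕜 V] in
/-- The orthogonal projection onto the range of an injective map `A`, as the
explicit formula `A (A†A)⁻¹ A†`. -/
lemma proj_formula [CompleteSpace V] [CompleteSpace W] (A : W →L[𝕜] V)
    (hA : Function.Injective A) :
    (LinearMap.range (A : W →ₗ[𝕜] V)).subtypeL.comp ((LinearMap.range (A : W →ₗ[𝕜] V)).orthogonalProjectionOnto) =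
      A.comp ((Ring.inverse ((ContinuousLinearMap.adjoint A).comp A)).comp
        (ContinuousLinearMap.adjoint A)) := by
  have hT : IsUnit ((ContinuousLinearMap.adjoint A).comp A) := isUnit_adjoint_comp A hA
  set T := (ContinuousLinearMap.adjoint A).comp A with hTdef
  have hTinv : T.comp (Ring.inverse T) = 1 := by
    simpa [ContinuousLinearMap.mul_def] using Ring.mul_inverse_cancel T hT
  ext x
  have hmem : A ((Ring.inverse T) ((ContinuousLinearMap.adjoint A) x)) ∈ LinearMap.range (A : W →ₗ[𝕜] V) :=
    LinearMap.mem_range_self _ _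
  have horth : x - A ((Ring.inverse T) ((ContinuousLinearMap.adjoint A) x))
      ∈ (LinearMap.range (A : W →ₗ[𝕜] V))ᗮ := by
    rw [Submodule.mem_orthogonal]
    rintro u ⟨y, rfl⟩
    have h1 : ⟪(A : W →L[𝕜] V) y, x - A ((Ring.inverse T) ((ContinuousLinearMap.adjoint A) x))⟫
        = ⟪y, (ContinuousLinearMap.adjoint A)
            (x - A ((Ring.inverse T) ((ContinuousLinearMap.adjoint A) x)))⟫ :=
      (ContinuousLinearMap.adjoint_inner_right A _ _).symm
    have h2 : (ContinuousLinearMap.adjoint A)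
        (x - A ((Ring.inverse T) ((ContinuousLinearMap.adjoint A) x))) = 0 := by
      rw [map_sub]
      have := congrArg (fun f : W →L[𝕜] W => f ((ContinuousLinearMap.adjoint A) x)) hTinv
      simp only [ContinuousLinearMap.comp_apply, ContinuousLinearMap.one_apply] at this
      rw [sub_eq_zero]
      exact this.symm
    rw [ContinuousLinearMap.coe_coe, h1, h2, inner_zero_right]
  simp only [ContinuousLinearMap.comp_apply, ContinuousLinearMap.coe_comp',
    Function.comp_apply, Submodule.subtypeL_apply]
  exact Submodule.eq_starProjection_of_mem_orthogonal hmem horth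

/-- The linear map `B ↦ (x ↦ ∑ i, B x (bᵢ) • bᵢ)` whose kernel is the kernel of `B` on the
second slot. -/
def PhiAux : (V →L[𝕜] V →L[𝕜] 𝕜) →ₗ[𝕜] (V →L[𝕜] V) where
  toFun B := ∑ i, ((B.flip (Module.finBasis 𝕜 V i)).smulRight (Module.finBasis 𝕜 V i))
  map_add' B C := by
    ext x
    simp [ContinuousLinearMap.sum_apply, ContinuousLinearMap.smulRight_apply,
      ContinuousLinearMap.flip_apply, add_smul, Finset.sum_add_distrib]
  map_smul' c B := by
    ext x
    simp [ContinuousLinearMap.sum_apply, ContinuousLinearMap.smulRight_apply,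
      ContinuousLinearMap.flip_apply, smul_smul, Finset.smul_sum]

lemma PhiAux_apply (B : V →L[𝕜] V →L[𝕜] 𝕜) (x : V) :
    PhiAux B x = ∑ i, B x (Module.finBasis 𝕜 V i) • (Module.finBasis 𝕜 V i) := by
  simp [PhiAux, ContinuousLinearMap.sum_apply, ContinuousLinearMap.smulRight_apply,
    ContinuousLinearMap.flip_apply]

lemma continuous_PhiAux : Continuous (PhiAux : (V →L[𝕜] V →L[𝕜] 𝕜) → (V →L[𝕜] V)) :=
  by
  exact LinearMap.continuous_of_finiteDimensional (E := V →L[𝕜] V →L[𝕜] 𝕜) (F' := V →L[𝕜] V)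
    (PhiAux (𝕜 := 𝕜) (V := V))

lemma PhiAux_eq_zero_iff (B : V →L[𝕜] V →L[𝕜] 𝕜) (x : V) :
    PhiAux B x = 0 ↔ ∀ v, B x v = 0 := by
  rw [PhiAux_apply]
  constructor
  · intro h v
    have hli := (Module.finBasis 𝕜 V).linearIndependent
    have hco : ∀ i, B x (Module.finBasis 𝕜 V i) = 0 :=
      Fintype.linearIndependent_iff.mp hli (fun i => B x (Module.finBasis 𝕜 V i)) h
    have : (B x : V →ₗ[𝕜] 𝕜) = 0 := (Module.finBasis 𝕜 V).ext (by simpa using hco)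
    have := congrArg (fun f : V →ₗ[𝕜] 𝕜 => f v) this
    simpa using this
  · intro h
    simp [h]

lemma ker_PhiAux (B : V →L[𝕜] V →L[𝕜] 𝕜) (hB : IsSkew B) :
    LinearMap.ker (PhiAux B : V →ₗ[𝕜] V) = nullSpace B := by
  ext x
  rw [LinearMap.mem_ker]
  change PhiAux B x = 0 ↔ ∀ v ∈ (⊤ : Submodule 𝕜 V), B v x = 0
  rw [PhiAux_eq_zero_iff]
  constructor
  · intro h v _
    rw [hB v x, h v, neg_zero]
  · intro h v
    rw [hB x v, h v trivial, neg_zero]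

end NullAux
section OpAux

local notation "⟪" x ", " y "⟫" => @inner 𝕜 _ _ x y

variable [CompleteSpace V] (N₀ : Submodule 𝕜 V)

/-- `M† M + P₀`. -/
def Gop (M : V →L[𝕜] V) : V →L[𝕜] V :=
  (ContinuousLinearMap.adjoint M).comp M + N₀.subtypeL.comp (N₀.orthogonalProjectionOnto)

lemma continuous_Gop : Continuous (Gop N₀) := by
  have h1 : Continuous fun M : V →L[𝕜] V =>
      (ContinuousLinearMap.adjoint M).comp M :=
    Continuous.clm_comp ((ContinuousLinearMap.adjoint (𝕜 := 𝕜) (E := V)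
      (F := V)).continuous) continuous_id
  exact h1.add continuous_const

lemma isUnit_Gop_self (M₀ : V →L[𝕜] V) (hker : LinearMap.ker (M₀ : V →ₗ[𝕜] V) = N₀) :
    IsUnit (Gop N₀ M₀) := by
  apply isUnit_of_injective'
  have hz : ∀ x, Gop N₀ M₀ x = 0 → x = 0 := by
    intro x hx
    set P₀ := N₀.subtypeL.comp (N₀.orthogonalProjectionOnto) with hP₀
    have hinner : ⟪x, Gop N₀ M₀ x⟫ = 0 := by rw [hx, inner_zero_right]
    have hsplit : ⟪x, Gop N₀ M₀ x⟫
        = ⟪M₀ x, M₀ x⟫ + ⟪x, P₀ x⟫ := by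
      rw [Gop, ContinuousLinearMap.add_apply, inner_add_right,
        ContinuousLinearMap.comp_apply, ContinuousLinearMap.adjoint_inner_right]
    have hP₀x : ⟪x, P₀ x⟫ = ⟪P₀ x, P₀ x⟫ := by
      have hmemo : x - P₀ x ∈ N₀ᗮ := Submodule.sub_starProjection_mem_orthogonal (K := N₀) x
      have hmem : P₀ x ∈ N₀ := (N₀.orthogonalProjectionOnto x).2
      have h := hmemo (P₀ x) hmem
      rw [inner_sub_right, sub_eq_zero] at h
      calc ⟪x, P₀ x⟫ = starRingEnd 𝕜 ⟪P₀ x, x⟫ := (inner_conj_symm _ _).symm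
        _ = starRingEnd 𝕜 ⟪P₀ x, P₀ x⟫ := by rw [h]
        _ = ⟪P₀ x, P₀ x⟫ := inner_self_conj _
    rw [hP₀x] at hsplit
    have hre : RCLike.re ⟪M₀ x, M₀ x⟫ + RCLike.re ⟪P₀ x, P₀ x⟫ = 0 := by
      have := congrArg RCLike.re (hsplit.symm.trans hinner)
      simpa [map_add] using this
    have h1 : (0:ℝ) ≤ RCLike.re ⟪M₀ x, M₀ x⟫ := inner_self_nonneg
    have h2 : (0:ℝ) ≤ RCLike.re ⟪P₀ x, P₀ x⟫ := inner_self_nonneg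
    have hM₀x : M₀ x = 0 := by
      have : RCLike.re ⟪M₀ x, M₀ x⟫ = 0 := by linarith
      exact inner_self_eq_zero.mp (by
        rw [← RCLike.re_add_im ⟪M₀ x, M₀ x⟫, inner_self_im, this]; simp)
    have hPx0 : P₀ x = 0 := by
      have : RCLike.re ⟪P₀ x, P₀ x⟫ = 0 := by linarith
      exact inner_self_eq_zero.mp (by
        rw [← RCLike.re_add_im ⟪P₀ x, P₀ x⟫, inner_self_im, this]; simp)
    have hxN : x ∈ N₀ := hker ▸ LinearMap.mem_ker.mpr hM₀x
    have : P₀ x = x := by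
      simp only [hP₀, ContinuousLinearMap.comp_apply, Submodule.subtypeL_apply]
      exact Submodule.starProjection_eq_self_iff.mpr hxN
    rw [this] at hPx0
    exact hPx0
  intro a b hab
  have : Gop N₀ M₀ (a - b) = 0 := by rw [map_sub, hab, sub_self]
  have := hz _ this
  rwa [sub_eq_zero] at this

/-- `(M†M + P₀)⁻¹ ∘ ι`. -/
def Aop (M : V →L[𝕜] V) : ↥N₀ →L[𝕜] V :=
  (Ring.inverse (Gop N₀ M)).comp N₀.subtypeL

lemma injective_Aop (M : V →L[𝕜] V) (hG : IsUnit (Gop N₀ M)) :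
    Function.Injective (Aop N₀ M) := by
  intro a b hab
  have h := congrArg (Gop N₀ M) hab
  have hcan : ∀ z : V, Gop N₀ M (Ring.inverse (Gop N₀ M) z) = z := by
    intro z
    have := Ring.mul_inverse_cancel (Gop N₀ M) hG
    have := congrArg (fun f : V →L[𝕜] V => f z) this
    simpa [ContinuousLinearMap.mul_apply] using this
  simp only [Aop, ContinuousLinearMap.comp_apply, Submodule.subtypeL_apply, hcan] at h
  exact Subtype.coe_injective h

lemma range_Aop (M : V →L[𝕜] V) (hG : IsUnit (Gop N₀ M))
    (hfr : finrank 𝕜 (LinearMap.ker (M : V →ₗ[𝕜] V)) = finrank 𝕜 N₀) :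
    LinearMap.range (Aop N₀ M : ↥N₀ →ₗ[𝕜] V) = LinearMap.ker (M : V →ₗ[𝕜] V) := by
  haveI : CompleteSpace ↥N₀ := FiniteDimensional.complete 𝕜 ↥N₀
  have hle : LinearMap.ker (M : V →ₗ[𝕜] V) ≤ LinearMap.range (Aop N₀ M : ↥N₀ →ₗ[𝕜] V) := by
    intro x hx
    have hMx : M x = 0 := LinearMap.mem_ker.mp hx
    set P₀ := N₀.subtypeL.comp (N₀.orthogonalProjectionOnto) with hP₀
    have hGx : Gop N₀ M x = P₀ x := by
      simp [Gop, ContinuousLinearMap.add_apply, ContinuousLinearMap.comp_apply, hMx, hP₀]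
    have hinv : ∀ z : V, Ring.inverse (Gop N₀ M) (Gop N₀ M z) = z := by
      intro z
      have := Ring.inverse_mul_cancel (Gop N₀ M) hG
      have := congrArg (fun f : V →L[𝕜] V => f z) this
      simpa [ContinuousLinearMap.mul_apply] using this
    refine ⟨N₀.orthogonalProjectionOnto x, ?_⟩
    show (Ring.inverse (Gop N₀ M)).comp N₀.subtypeL (N₀.orthogonalProjectionOnto x) = x
    calc (Ring.inverse (Gop N₀ M)) (N₀.subtypeL (N₀.orthogonalProjectionOnto x))
        = (Ring.inverse (Gop N₀ M)) (P₀ x) := rfl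
      _ = (Ring.inverse (Gop N₀ M)) (Gop N₀ M x) := by rw [hGx]
      _ = x := hinv x
  refine (Submodule.eq_of_le_of_finrank_le hle ?_).symm
  have : finrank 𝕜 ↥(LinearMap.range (Aop N₀ M : ↥N₀ →ₗ[𝕜] V)) = finrank 𝕜 ↥N₀ := by
    have := LinearMap.finrank_range_of_inj
      (f := ((Aop N₀ M) : ↥N₀ →ₗ[𝕜] V)) (injective_Aop N₀ M hG)
    exact this
  rw [this, hfr]

end OpAux
section OpAux2

variable [CompleteSpace V] (N₀ : Submodule 𝕜 V) [CompleteSpace ↥N₀]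

/-- The candidate projection `A (A†A)⁻¹ A†` with `A = (M†M + P₀)⁻¹ ∘ ι`. -/
def Pop (M : V →L[𝕜] V) : V →L[𝕜] V :=
  (Aop N₀ M).comp
    ((Ring.inverse ((ContinuousLinearMap.adjoint (Aop N₀ M)).comp (Aop N₀ M))).comp
      (ContinuousLinearMap.adjoint (Aop N₀ M)))

lemma Pop_eq_proj (M : V →L[𝕜] V) (hG : IsUnit (Gop N₀ M))
    (hfr : finrank 𝕜 (LinearMap.ker (M : V →ₗ[𝕜] V)) = finrank 𝕜 N₀) :
    (LinearMap.ker (M : V →ₗ[𝕜] V)).subtypeL.comp ((LinearMap.ker (M : V →ₗ[𝕜] V)).orthogonalProjectionOnto) = Pop N₀ M := by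
  have hinj := injective_Aop N₀ M hG
  have h := proj_formula (Aop N₀ M) hinj
  have hc := congrArg
    (fun W : Submodule 𝕜 V => W.subtypeL.comp (W.orthogonalProjectionOnto) : Submodule 𝕜 V → (V →L[𝕜] V))
    (range_Aop N₀ M hG hfr)
  exact hc.symm.trans h

lemma continuousAt_Pop (M₀ : V →L[𝕜] V) (hG₀ : IsUnit (Gop N₀ M₀)) :
    ContinuousAt (Pop N₀) M₀ := by
  have hGinv : ContinuousAt (fun M => Ring.inverse (Gop N₀ M)) M₀ := by
    have h1 : ContinuousAt Ring.inverse ((Gop N₀ M₀ : V →L[𝕜] V)) := by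
      have := NormedRing.inverse_continuousAt hG₀.unit
      rwa [IsUnit.unit_spec] at this
    exact h1.comp (continuous_Gop N₀).continuousAt
  have hA : ContinuousAt (fun M => Aop N₀ M) M₀ := by
    have hc : Continuous fun g : V →L[𝕜] V => g.comp N₀.subtypeL :=
      Continuous.clm_comp continuous_id continuous_const
    exact (hc.continuousAt).comp hGinv
  have hAadj : ContinuousAt (fun M => ContinuousLinearMap.adjoint (Aop N₀ M)) M₀ := by
    have hadj : Continuous fun A : ↥N₀ →L[𝕜] V => ContinuousLinearMap.adjoint A :=
      (ContinuousLinearMap.adjoint (𝕜 := 𝕜) (E := ↥N₀) (F := V)).continuous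
    exact hadj.continuousAt.comp hA
  have hT : ContinuousAt
      (fun M => (ContinuousLinearMap.adjoint (Aop N₀ M)).comp (Aop N₀ M)) M₀ := by
    have hc : Continuous fun p : (V →L[𝕜] ↥N₀) × (↥N₀ →L[𝕜] V) => p.1.comp p.2 :=
      Continuous.clm_comp continuous_fst continuous_snd
    exact hc.continuousAt.comp₂ hAadj hA
  have hTM₀ : IsUnit ((ContinuousLinearMap.adjoint (Aop N₀ M₀)).comp (Aop N₀ M₀)) :=
    isUnit_adjoint_comp _ (injective_Aop N₀ M₀ hG₀)
  have hTinv : ContinuousAt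
      (fun M => Ring.inverse
        ((ContinuousLinearMap.adjoint (Aop N₀ M)).comp (Aop N₀ M))) M₀ := by
    have h1 : ContinuousAt Ring.inverse
        ((ContinuousLinearMap.adjoint (Aop N₀ M₀)).comp (Aop N₀ M₀)) := by
      have := NormedRing.inverse_continuousAt hTM₀.unit
      rwa [IsUnit.unit_spec] at this
    exact ContinuousAt.comp (g := Ring.inverse)
      (f := fun M => (ContinuousLinearMap.adjoint (Aop N₀ M)).comp (Aop N₀ M)) h1 hT
  have hinner : ContinuousAt
      (fun M => (Ring.inverse
          ((ContinuousLinearMap.adjoint (Aop N₀ M)).comp (Aop N₀ M))).comp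
        (ContinuousLinearMap.adjoint (Aop N₀ M))) M₀ := by
    have hc : Continuous fun p : (↥N₀ →L[𝕜] ↥N₀) × (V →L[𝕜] ↥N₀) => p.1.comp p.2 :=
      Continuous.clm_comp continuous_fst continuous_snd
    exact hc.continuousAt.comp₂ hTinv hAadj
  have hc : Continuous fun p : (↥N₀ →L[𝕜] V) × (V →L[𝕜] ↥N₀) => p.1.comp p.2 :=
    Continuous.clm_comp continuous_fst continuous_snd
  exact hc.continuousAt.comp₂ hA hinner

end OpAux2
/-- For a finite-dimensional vector space `V` over `𝕜 ∈ {ℝ, ℂ}` with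
`dim V = n` and every `k ∈ {0, …, n}`, the null-space mapping `B ↦ N(B)` is continuous on
`(∧²V)*_k = {B skew-symmetric : dim N(B) = k}`, with values in `Gr_k(V)`. -/
theorem continuousOn_nullSpace_of_constRank
    (n : ℕ) (hn : finrank 𝕜 V = n) (k : ℕ) (hk : k ≤ n) :
    ContinuousOn (fun B : V →L[𝕜] V →L[𝕜] 𝕜 => nullSpace B)
      {B : V →L[𝕜] V →L[𝕜] 𝕜 | IsSkew B ∧ finrank 𝕜 (nullSpace B) = k} := by
  haveI : CompleteSpace V := FiniteDimensional.complete 𝕜 V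
  set s := {B : V →L[𝕜] V →L[𝕜] 𝕜 | IsSkew B ∧ finrank 𝕜 (nullSpace B) = k} with hs
  intro B₀ hB₀
  set N₀ := nullSpace B₀ with hN₀
  haveI : CompleteSpace ↥N₀ := FiniteDimensional.complete 𝕜 ↥N₀
  set π := fun W : Submodule 𝕜 V => (W.subtypeL.comp (W.orthogonalProjectionOnto) : V →L[𝕜] V)
    with hπ
  show Tendsto (fun B => nullSpace B) (𝓝[s] B₀) (𝓝 (nullSpace B₀))
  have hnhds : 𝓝 (nullSpace B₀) = Filter.comap π (𝓝 (π (nullSpace B₀))) := nhds_induced π _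
  rw [hnhds, tendsto_comap_iff]
  have hB₀s : IsSkew B₀ ∧ finrank 𝕜 (nullSpace B₀) = k := hB₀
  have hker₀ : LinearMap.ker (PhiAux B₀ : V →ₗ[𝕜] V) = N₀ := ker_PhiAux B₀ hB₀s.1
  have hG₀ : IsUnit (Gop N₀ (PhiAux B₀)) := isUnit_Gop_self N₀ (PhiAux B₀) hker₀
  have hev : (π ∘ fun B => nullSpace B) =ᶠ[𝓝[s] B₀] fun B => Pop N₀ (PhiAux B) := by
    have hU : ∀ᶠ B in 𝓝[s] B₀, IsUnit (Gop N₀ (PhiAux B)) := by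
      have hopen : IsOpen {M : V →L[𝕜] V | IsUnit M} := Units.isOpen
      have hmem : {B : V →L[𝕜] V →L[𝕜] 𝕜 | IsUnit (Gop N₀ (PhiAux B))} ∈ 𝓝 B₀ :=
        (hopen.preimage ((continuous_Gop N₀).comp continuous_PhiAux)).mem_nhds hG₀
      exact nhdsWithin_le_nhds hmem
    have hmem : ∀ᶠ B in 𝓝[s] B₀, B ∈ s := eventually_mem_nhdsWithin
    filter_upwards [hU, hmem] with B hGB hBs
    have hBs' : IsSkew B ∧ finrank 𝕜 (nullSpace B) = k := hBs
    have hkerB : LinearMap.ker (PhiAux B : V →ₗ[𝕜] V) = nullSpace B := ker_PhiAux B hBs'.1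
    have hfr : finrank 𝕜 (LinearMap.ker (PhiAux B : V →ₗ[𝕜] V)) = finrank 𝕜 N₀ := by
      rw [hkerB, hBs'.2, hN₀, hB₀s.2]
    have h1 : π (LinearMap.ker (PhiAux B : V →ₗ[𝕜] V)) = Pop N₀ (PhiAux B) :=
      Pop_eq_proj N₀ (PhiAux B) hGB hfr
    have h2 : π (nullSpace B) = π (LinearMap.ker (PhiAux B : V →ₗ[𝕜] V)) := congrArg π hkerB.symm
    exact h2.trans h1
  have hval : Pop N₀ (PhiAux B₀) = π (nullSpace B₀) := by
    have hfr₀ : finrank 𝕜 (LinearMap.ker (PhiAux B₀ : V →ₗ[𝕜] V)) = finrank 𝕜 N₀ := by rw [hker₀]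
    have h1 : π (LinearMap.ker (PhiAux B₀ : V →ₗ[𝕜] V)) = Pop N₀ (PhiAux B₀) :=
      Pop_eq_proj N₀ (PhiAux B₀) hG₀ hfr₀
    have h2 : π (nullSpace B₀) = π (LinearMap.ker (PhiAux B₀ : V →ₗ[𝕜] V)) := congrArg π hker₀.symm
    exact (h2.trans h1).symm
  have hcont : ContinuousAt (fun B => Pop N₀ (PhiAux B)) B₀ :=
    ContinuousAt.comp (continuousAt_Pop N₀ (PhiAux B₀) hG₀) continuous_PhiAux.continuousAt
  have htend : Tendsto (fun B => Pop N₀ (PhiAux B)) (𝓝[s] B₀) (𝓝 (Pop N₀ (PhiAux B₀))) :=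
    hcont.continuousWithinAt
  rw [hval] at htend
  exact Tendsto.congr' hev.symm htend

end
end

section
/- Let V be a vector space over K ∈ {ℝ, ℂ} with m := dim V < ∞, a fixed complete flag {0} = V₀ ⊊ ⋯ ⊊ V_m = V, and B ∈ (∧²V)* ∖ {0}. With p⁰(B) := V and, inductively, as long as p^k(B) is not B-isotropic, i_{k+1} := min{i : V_i ∩ p^k(B) is not B-orthogonal to p^k(B)}, p^{k+1}(B) := (V_{i_{k+1}} ∩ p^k(B))^{⊥_B} ∩ p^k(B), and j_{k+1} := min{j : V_j ∩ p^k(B) ⊄ p^{k+1}(B)}, the following hold: (i) p^{k+1}(B) ⊊ p^k(B) and dim(p^k(B)/p^{k+1}(B)) = 1; (ii) p^k(B) = p^{k+1}(B) ⊕ (V_{j_{k+1}} ∩ p^k(B)); (iii) V_{i_{k+1}} ∩ p^k(B) ⊆ p^{k+1}(B); (iv) V_{i_{k+1}} ∩ p^k(B) is B-orthogonal to p^{k+1}(B); (v) p^k(B)^{⊥_B} ∩ p^k(B) ⊆ p^{k+1}(B)^{⊥_B} ∩ p^{k+1}(B). -/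
open Module Filter Topology

noncomputable section

variable {𝕜 : Type} [RCLike 𝕜]

variable {V : Type} [NormedAddCommGroup V] [InnerProductSpace 𝕜 V] [FiniteDimensional 𝕜 V]

/-- `N(B_j)`, the null space of the restriction of `B` to `W × W`, regarded as a subspace
of `V`. -/
def nullIn (B : V →L[𝕜] V →L[𝕜] 𝕜) (W : Submodule 𝕜 V) : Submodule 𝕜 V :=
  perpB B W ⊓ W

/-- The index `i_{k+1} := min {i : V_i ∩ P ⊬_B P}` from the inductive construction, where
`P` stands for `p^k(B)` and the flag is encoded as `Vn : ℕ → Submodule 𝕜 V` (constantly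
`V` beyond `m`). -/
noncomputable def iIdx (B : V →L[𝕜] V →L[𝕜] 𝕜) (Vn : ℕ → Submodule 𝕜 V)
    (P : Submodule 𝕜 V) : ℕ :=
  sInf {i : ℕ | ¬ IsOrthoPair B (Vn i ⊓ P) P}

/-- One step of the inductive construction:
`p^{k+1}(B) := (V_{i_{k+1}} ∩ p^k(B))^{⊥_B} ∩ p^k(B)`. -/
noncomputable def pStep (B : V →L[𝕜] V →L[𝕜] 𝕜) (Vn : ℕ → Submodule 𝕜 V)
    (P : Submodule 𝕜 V) : Submodule 𝕜 V :=
  perpB B (Vn (iIdx B Vn P) ⊓ P) ⊓ P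

/-- The sequence `p⁰(B) = V, p¹(B), p²(B), …` of the inductive construction. -/
noncomputable def pSeq (B : V →L[𝕜] V →L[𝕜] 𝕜) (Vn : ℕ → Submodule 𝕜 V) :
    ℕ → Submodule 𝕜 V
  | 0 => ⊤
  | k + 1 => pStep B Vn (pSeq B Vn k)

/-- The index `j_{k+1} := min {j : V_j ∩ p^k(B) ⊄ p^{k+1}(B)}`, where `P` stands for
`p^k(B)`. -/
noncomputable def jIdx (B : V →L[𝕜] V →L[𝕜] 𝕜) (Vn : ℕ → Submodule 𝕜 V)
    (P : Submodule 𝕜 V) : ℕ :=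
  sInf {j : ℕ | ¬ Vn j ⊓ P ≤ pStep B Vn P}

/-- The jump set `jump W := {j ∈ {1, …, m} : V_j ⊄ V_{j-1} + W}`. -/
def jumpSetN (m : ℕ) (Vn : ℕ → Submodule 𝕜 V) (W : Submodule 𝕜 V) : Set ℕ :=
  {j | 1 ≤ j ∧ j ≤ m ∧ ¬ Vn j ≤ Vn (j - 1) ⊔ W}

/-- The subspace `p(B) := N(B₁) + ⋯ + N(B_m)` where `B_j := B|_{V_j × V_j}`. -/
noncomputable def lagSumN (m : ℕ) (Vn : ℕ → Submodule 𝕜 V) (B : V →L[𝕜] V →L[𝕜] 𝕜) :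
    Submodule 𝕜 V :=
  ∑ j ∈ Finset.Icc 1 m, nullIn B (Vn j)


lemma mem_perpB {B : V →L[𝕜] V →L[𝕜] 𝕜} {S : Submodule 𝕜 V} {w : V} :
    w ∈ perpB B S ↔ ∀ v ∈ S, B v w = 0 := Iff.rfl

/-- For a complete flag `{0} = V₀ ⊊ ⋯ ⊊ V_m = V` (encoded by
`Vn : ℕ → Submodule 𝕜 V`, constantly `V` beyond `m`), a nonzero skew-symmetric bilinear
form `B`, and `k` such that `p^k(B)` is not `B`-isotropic, the inductive construction
satisfies: (i) `p^{k+1}(B) ⊊ p^k(B)` with `dim (p^k(B) / p^{k+1}(B)) = 1`;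
(ii) `p^k(B) = p^{k+1}(B) + (V_{j_{k+1}} ∩ p^k(B))`;
(iii) `V_{i_{k+1}} ∩ p^k(B) ⊆ p^{k+1}(B)`;
(iv) `V_{i_{k+1}} ∩ p^k(B) ⊥_B p^{k+1}(B)`;
(v) `p^k(B)^{⊥_B} ∩ p^k(B) ⊆ p^{k+1}(B)^{⊥_B} ∩ p^{k+1}(B)`. -/
theorem pSeq_step_properties
    (m : ℕ) (hm : finrank 𝕜 V = m)
    (Vn : ℕ → Submodule 𝕜 V) (hV0 : Vn 0 = ⊥) (hmono : Monotone Vn)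
    (hrank : ∀ j ≤ m, finrank 𝕜 (Vn j) = j) (htop : ∀ j, m ≤ j → Vn j = ⊤)
    (B : V →L[𝕜] V →L[𝕜] 𝕜) (hB : IsSkew B) (hB0 : B ≠ 0)
    (k : ℕ) (hk : ¬ IsIsotropic B (pSeq B Vn k)) :
    (pSeq B Vn (k + 1) < pSeq B Vn k ∧
      finrank 𝕜 (pSeq B Vn k) = finrank 𝕜 (pSeq B Vn (k + 1)) + 1) ∧
    pSeq B Vn k = pSeq B Vn (k + 1) ⊔ (Vn (jIdx B Vn (pSeq B Vn k)) ⊓ pSeq B Vn k) ∧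
    Vn (iIdx B Vn (pSeq B Vn k)) ⊓ pSeq B Vn k ≤ pSeq B Vn (k + 1) ∧
    IsOrthoPair B (Vn (iIdx B Vn (pSeq B Vn k)) ⊓ pSeq B Vn k) (pSeq B Vn (k + 1)) ∧
    perpB B (pSeq B Vn k) ⊓ pSeq B Vn k ≤
      perpB B (pSeq B Vn (k + 1)) ⊓ pSeq B Vn (k + 1) := by
  classical
  have hstep : pSeq B Vn (k+1) = pStep B Vn (pSeq B Vn k) := rfl
  rw [hstep]
  set P := pSeq B Vn k with hPdef
  -- the index i
  have hmSi : m ∈ {i : ℕ | ¬ IsOrthoPair B (Vn i ⊓ P) P} := by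
    simp only [Set.mem_setOf_eq, htop m le_rfl, top_inf_eq]
    exact hk
  set i := iIdx B Vn P with hidef
  have hiSi : ¬ IsOrthoPair B (Vn i ⊓ P) P := Nat.sInf_mem ⟨m, hmSi⟩
  have hile : i ≤ m := Nat.sInf_le hmSi
  have hi1 : 1 ≤ i := by
    rcases Nat.eq_zero_or_pos i with h | h
    · exfalso
      apply hiSi
      rw [h, hV0, bot_inf_eq]
      intro v hv w hw
      simp only [Submodule.mem_bot] at hv
      simp [hv]
    · exact h
  have hprev : IsOrthoPair B (Vn (i-1) ⊓ P) P := by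
    by_contra h
    have h2 : i ≤ i - 1 :=
      Nat.sInf_le (show (i-1) ∈ {i : ℕ | ¬ IsOrthoPair B (Vn i ⊓ P) P} from h)
    omega
  obtain ⟨u, hu, v, hv, huv⟩ : ∃ u ∈ Vn i ⊓ P, ∃ v ∈ P, B u v ≠ 0 := by
    simp only [IsOrthoPair] at hiSi
    push_neg at hiSi
    exact hiSi
  have huP : u ∈ P := hu.2
  have hunotA : u ∉ Vn (i-1) ⊓ P := fun h => huv (hprev u h v hv)
  have hAA' : Vn (i-1) ⊓ P ≤ Vn i ⊓ P := inf_le_inf_right P (hmono (by omega))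
  have hfinA' : finrank 𝕜 ↥(Vn i ⊓ P) ≤ finrank 𝕜 ↥(Vn (i-1) ⊓ P) + 1 := by
    have h1 := Submodule.finrank_sup_add_finrank_inf_eq (Vn (i-1)) (Vn i ⊓ P)
    have h2 : Vn (i-1) ⊓ (Vn i ⊓ P) = Vn (i-1) ⊓ P := by
      rw [← inf_assoc, inf_eq_left.mpr (hmono (by omega : i - 1 ≤ i))]
    have h3 : Vn (i-1) ⊔ (Vn i ⊓ P) ≤ Vn i := sup_le (hmono (by omega)) inf_le_left
    have h4 : finrank 𝕜 ↥(Vn (i-1) ⊔ (Vn i ⊓ P)) ≤ finrank 𝕜 ↥(Vn i) :=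
      Submodule.finrank_mono h3
    have h5 : finrank 𝕜 ↥(Vn i) = i := hrank i hile
    have h6 : finrank 𝕜 ↥(Vn (i-1)) = i - 1 := hrank (i-1) (by omega)
    rw [h2] at h1
    omega
  have hA'eq : Vn i ⊓ P = (Vn (i-1) ⊓ P) ⊔ 𝕜 ∙ u := by
    refine (Submodule.eq_of_le_of_finrank_le
      (sup_le hAA' ((Submodule.span_singleton_le_iff_mem u _).mpr hu)) ?_).symm
    have hlt : Vn (i-1) ⊓ P < (Vn (i-1) ⊓ P) ⊔ 𝕜 ∙ u :=
      lt_of_le_of_ne le_sup_left (fun h => hunotA (h ▸ (le_sup_right :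
        (𝕜 ∙ u) ≤ (Vn (i-1) ⊓ P) ⊔ 𝕜 ∙ u) (Submodule.mem_span_singleton_self u)))
    have := Submodule.finrank_lt_finrank_of_lt hlt
    omega
  -- characterization of the step
  have hP'eq : pStep B Vn P = LinearMap.ker (B u : V →ₗ[𝕜] 𝕜) ⊓ P := by
    ext w
    simp only [pStep, ← hidef, Submodule.mem_inf, LinearMap.mem_ker, ContinuousLinearMap.coe_coe, mem_perpB]
    constructor
    · rintro ⟨hperp, hwP⟩
      exact ⟨hperp u hu, hwP⟩
    · rintro ⟨hker, hwP⟩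
      refine ⟨fun x hx => ?_, hwP⟩
      have hx' : x ∈ Vn i ⊓ P := Submodule.mem_inf.mpr hx
      rw [hA'eq] at hx'
      replace hx := hx' 
      obtain ⟨a, ha, b, hb, rfl⟩ := Submodule.mem_sup.mp hx
      obtain ⟨c, rfl⟩ := Submodule.mem_span_singleton.mp hb
      have h1 : B a w = 0 := hprev a ha w hwP
      simp [h1, hker]
  have hfrank : finrank 𝕜 ↥P = finrank 𝕜 ↥(pStep B Vn P) + 1 := by
    set f : P →ₗ[𝕜] 𝕜 := ((B u) : V →ₗ[𝕜] 𝕜).comp P.subtype with hf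
    have hker : LinearMap.ker f = (LinearMap.ker (B u : V →ₗ[𝕜] 𝕜) ⊓ P).comap P.subtype := by
      ext x
      simp [hf, LinearMap.mem_ker, Submodule.mem_comap, x.2]
    have hrange : LinearMap.range f = ⊤ := by
      rw [LinearMap.range_eq_top]
      intro c
      refine ⟨(c / B u v) • ⟨v, hv⟩, ?_⟩
      simp [hf]
      field_simp
    have h1 := LinearMap.finrank_range_add_finrank_ker f
    rw [hrange, finrank_top, finrank_self] at h1
    have h2 : finrank 𝕜 (LinearMap.ker f) = finrank 𝕜 ↥(pStep B Vn P) := by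
      rw [hker, hP'eq]
      exact LinearEquiv.finrank_eq (Submodule.comapSubtypeEquivOfLe inf_le_right)
    omega
  have hP'le : pStep B Vn P ≤ P := inf_le_right
  have hlt : pStep B Vn P < P := by
    refine lt_of_le_of_ne hP'le (fun h => ?_)
    rw [h] at hfrank
    omega
  -- (iii)
  have hiii : Vn i ⊓ P ≤ pStep B Vn P := by
    rw [hP'eq, hA'eq]
    apply sup_le
    · intro a ha
      refine ⟨?_, ha.2⟩
      have h1 : B a u = 0 := hprev a ha u huP
      simp only [SetLike.mem_coe, LinearMap.mem_ker, ContinuousLinearMap.coe_coe]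
      rw [hB u a, h1, neg_zero]
    · rw [Submodule.span_singleton_le_iff_mem]
      refine ⟨?_, huP⟩
      simp only [SetLike.mem_coe, LinearMap.mem_ker, ContinuousLinearMap.coe_coe]
      linear_combination (hB u u) / 2
  -- (iv)
  have hiv : IsOrthoPair B (Vn i ⊓ P) (pStep B Vn P) := by
    intro x hx y hy
    have := (Submodule.mem_inf.mp hy).1
    exact mem_perpB.mp this x (by rwa [← hidef])
  -- (ii)
  have hmSj : m ∈ {j : ℕ | ¬ Vn j ⊓ P ≤ pStep B Vn P} := by
    simp only [Set.mem_setOf_eq, htop m le_rfl, top_inf_eq]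
    exact fun h => absurd (lt_of_lt_of_le hlt h) (lt_irrefl _)
  set j := jIdx B Vn P with hjdef
  have hjSj : ¬ Vn j ⊓ P ≤ pStep B Vn P := Nat.sInf_mem ⟨m, hmSj⟩
  obtain ⟨w, hwj, hwP'⟩ := SetLike.not_le_iff_exists.mp hjSj
  have hii : P = pStep B Vn P ⊔ (Vn j ⊓ P) := by
    refine (Submodule.eq_of_le_of_finrank_le (sup_le hP'le inf_le_right) ?_).symm
    have hlt2 : pStep B Vn P < pStep B Vn P ⊔ (𝕜 ∙ w) :=
      lt_of_le_of_ne le_sup_left (fun h => hwP' (h ▸ (le_sup_right :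
        (𝕜 ∙ w) ≤ pStep B Vn P ⊔ (𝕜 ∙ w)) (Submodule.mem_span_singleton_self w)))
    have h3 := Submodule.finrank_lt_finrank_of_lt hlt2
    have h4 : pStep B Vn P ⊔ (𝕜 ∙ w) ≤ pStep B Vn P ⊔ (Vn j ⊓ P) :=
      sup_le_sup_left ((Submodule.span_singleton_le_iff_mem w _).mpr hwj) _
    have h5 := Submodule.finrank_mono h4
    omega
  -- (v)
  have hv5 : perpB B P ⊓ P ≤ perpB B (pStep B Vn P) ⊓ pStep B Vn P := by
    intro x hx
    obtain ⟨hx1, hx2⟩ := Submodule.mem_inf.mp hx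
    have hxP' : x ∈ pStep B Vn P := by
      rw [hP'eq]
      exact ⟨mem_perpB.mp hx1 u huP, hx2⟩
    exact Submodule.mem_inf.mpr
      ⟨fun y hy => mem_perpB.mp hx1 y (hP'le hy), hxP'⟩
  exact ⟨⟨hlt, hfrank⟩, hii, hiii, hiv, hv5⟩
end
end

section
/- With V, the complete flag {0} = V₀ ⊊ ⋯ ⊊ V_m = V, B ∈ (∧²V)* ∖ {0}, the indices i_k from the inductive construction, d the stopping index (p^{d−1}(B) not B-isotropic, p^d(B) B-isotropic), and p(B) := N(B|_{V₁×V₁}) + ⋯ + N(B|_{V_m×V_m}), the mapping {1, …, d} → jump N(B) ∖ jump p(B), k ↦ i_k, is a well-defined increasing bijection. -/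
open Module Filter Topology

noncomputable section

variable {𝕜 : Type} [RCLike 𝕜]

variable {V : Type} [NormedAddCommGroup V] [InnerProductSpace 𝕜 V] [FiniteDimensional 𝕜 V]

set_option linter.unusedSectionVars false
set_option linter.unusedVariables false
set_option maxHeartbeats 1000000

variable {B : V →L[𝕜] V →L[𝕜] 𝕜} {S Q : Submodule 𝕜 V} {x z : V}

lemma aux_mem_perpB : x ∈ perpB B S ↔ ∀ v ∈ S, B v x = 0 := Iff.rfl

lemma aux_skew_self (hB : IsSkew B) (x : V) : B x x = 0 := by
  have h := hB x x
  have h2 : B x x + B x x = 0 := by nth_rewrite 1 [h]; exact neg_add_cancel _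
  exact add_self_eq_zero.mp h2

lemma aux_skew_zero (hB : IsSkew B) (h : B x z = 0) : B z x = 0 := by
  rw [hB z x, h, neg_zero]

lemma aux_mem_nullSpace : x ∈ nullSpace B ↔ ∀ v, B v x = 0 :=
  ⟨fun h v => h v trivial, fun h v _ => h v⟩

lemma aux_nullSpace_le_perpB : nullSpace B ≤ perpB B S :=
  fun x hx v _ => aux_mem_nullSpace.mp hx v

lemma aux_mem_perpB_span : x ∈ perpB B (𝕜 ∙ z) ↔ B z x = 0 := by
  constructor
  · intro h; exact h z (Submodule.mem_span_singleton_self z)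
  · intro h v hv
    obtain ⟨c, rfl⟩ := Submodule.mem_span_singleton.mp hv
    simp [h]

lemma aux_finrank_inf_le {A A' P : Submodule 𝕜 V} (hAA : A ≤ A')
    (h : finrank 𝕜 A' ≤ finrank 𝕜 A + 1) :
    finrank 𝕜 ↥(A' ⊓ P) ≤ finrank 𝕜 ↥(A ⊓ P) + 1 := by
  have h1 := Submodule.finrank_sup_add_finrank_inf_eq (A' ⊓ P) A
  have h2 : (A' ⊓ P) ⊓ A = A ⊓ P := by
    rw [inf_comm (A' ⊓ P) A, ← inf_assoc, inf_eq_left.mpr hAA]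
  have h3 : (A' ⊓ P) ⊔ A ≤ A' := sup_le inf_le_left hAA
  have h4 : finrank 𝕜 ↥((A' ⊓ P) ⊔ A) ≤ finrank 𝕜 A' := Submodule.finrank_mono h3
  have h5 : finrank 𝕜 ↥(A' ⊓ P) ≤ finrank 𝕜 ↥((A' ⊓ P) ⊔ A) := Submodule.finrank_mono le_sup_left
  rw [h2] at h1
  omega

lemma aux_finrank_sup_line (hz : z ∉ Q) :
    finrank 𝕜 ↥(Q ⊔ 𝕜 ∙ z) = finrank 𝕜 ↥Q + 1 := by
  have hz0 : z ≠ 0 := fun h => hz (h ▸ Q.zero_mem)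
  have hinf : Q ⊓ (𝕜 ∙ z) = ⊥ := by
    rw [eq_bot_iff]
    rintro x ⟨hxQ, hxz⟩
    obtain ⟨c, rfl⟩ := Submodule.mem_span_singleton.mp hxz
    rcases eq_or_ne c 0 with rfl | hc
    · simp
    · have hzQ : z ∈ Q := by
        have h' := Q.smul_mem c⁻¹ hxQ
        rwa [smul_smul, inv_mul_cancel₀ hc, one_smul] at h'
      exact absurd hzQ hz
  have := Submodule.finrank_sup_add_finrank_inf_eq Q (𝕜 ∙ z)
  rw [hinf, finrank_span_singleton hz0] at this
  simpa using this

lemma aux_finrank_ker_le (B : V →L[𝕜] V →L[𝕜] 𝕜) (Q : Submodule 𝕜 V) (z : V) :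
    finrank 𝕜 ↥Q ≤ finrank 𝕜 ↥(Q ⊓ perpB B (𝕜 ∙ z)) + 1 := by
  classical
  set f : ↥Q →ₗ[𝕜] 𝕜 := (B z).toLinearMap.comp Q.subtype with hf
  have hker : LinearMap.ker f = Submodule.comap Q.subtype (Q ⊓ perpB B (𝕜 ∙ z)) := by
    ext ⟨u, hu⟩
    simp only [LinearMap.mem_ker, Submodule.mem_comap, Submodule.mem_inf, hf,
      LinearMap.comp_apply, Submodule.subtype_apply, ContinuousLinearMap.coe_coe]
    constructor
    · intro h; exact ⟨hu, aux_mem_perpB_span.mpr h⟩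
    · intro h; exact aux_mem_perpB_span.mp h.2
  have h1 := LinearMap.finrank_range_add_finrank_ker f
  have h2 : finrank 𝕜 ↥(LinearMap.ker f) = finrank 𝕜 ↥(Q ⊓ perpB B (𝕜 ∙ z)) := by
    rw [hker]
    exact (Submodule.comapSubtypeEquivOfLe inf_le_left).finrank_eq
  have h3 : finrank 𝕜 ↥(LinearMap.range f) ≤ 1 := by
    simpa using Submodule.finrank_le (LinearMap.range f)
  omega

lemma aux_finrank_ker_eq (hw : ∃ w ∈ Q, B z w ≠ 0) :
    finrank 𝕜 ↥Q = finrank 𝕜 ↥(Q ⊓ perpB B (𝕜 ∙ z)) + 1 := by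
  obtain ⟨w, hwQ, hwz⟩ := hw
  have hle := aux_finrank_ker_le B Q z
  have hlt : Q ⊓ perpB B (𝕜 ∙ z) < Q := by
    refine lt_of_le_of_ne inf_le_left (fun h => ?_)
    have : w ∈ Q ⊓ perpB B (𝕜 ∙ z) := h.symm ▸ hwQ
    exact hwz (aux_mem_perpB_span.mp this.2)
  have := Submodule.finrank_lt_finrank_of_lt hlt
  omega

variable {m d k : ℕ} {Vn : ℕ → Submodule 𝕜 V}

lemma aux_pSeq_succ_le : pSeq B Vn (k+1) ≤ pSeq B Vn k := inf_le_right

lemma aux_pSeq_le {k l : ℕ} (h : k ≤ l) : pSeq B Vn l ≤ pSeq B Vn k := by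
  induction l, h using Nat.le_induction with
  | base => exact le_rfl
  | succ n hn ih => exact le_trans aux_pSeq_succ_le ih

lemma aux_iso_stable (hV0 : Vn 0 = ⊥) (hiso : IsIsotropic B (pSeq B Vn k)) :
    pSeq B Vn (k+1) = pSeq B Vn k := by
  have hempty : {i : ℕ | ¬ IsOrthoPair B (Vn i ⊓ pSeq B Vn k) (pSeq B Vn k)} = ∅ := by
    rw [Set.eq_empty_iff_forall_notMem]
    intro i hi
    exact hi (fun v hv w hw => hiso v hv.2 w hw)
  show pStep B Vn (pSeq B Vn k) = pSeq B Vn k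
  unfold pStep iIdx
  rw [hempty, Nat.sInf_empty, hV0, bot_inf_eq]
  have hperp : perpB B (⊥ : Submodule 𝕜 V) = ⊤ := by
    rw [eq_top_iff]
    intro x _ v hv
    have hv0 : v = 0 := by simpa using hv
    simp [hv0]
  rw [hperp, top_inf_eq]

lemma aux_notIso (hV0 : Vn 0 = ⊥) (hd2 : ¬ IsIsotropic B (pSeq B Vn (d - 1))) :
    ∀ k < d, ¬ IsIsotropic B (pSeq B Vn k) := by
  intro k hk hiso
  have hall : ∀ l, k ≤ l → pSeq B Vn l = pSeq B Vn k := by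
    intro l hl
    induction l, hl using Nat.le_induction with
    | base => rfl
    | succ n hn ih =>
      have hiso' : IsIsotropic B (pSeq B Vn n) := by rw [ih]; exact hiso
      rw [aux_iso_stable hV0 hiso', ih]
  exact hd2 (by rw [hall (d-1) (by omega)]; exact hiso)

lemma aux_idx_spec (hV0 : Vn 0 = ⊥) (htop : ∀ j, m ≤ j → Vn j = ⊤)
    (P : Submodule 𝕜 V) (hni : ¬ IsIsotropic B P) :
    (¬ IsOrthoPair B (Vn (iIdx B Vn P) ⊓ P) P) ∧
    (∀ i' < iIdx B Vn P, IsOrthoPair B (Vn i' ⊓ P) P) ∧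
    1 ≤ iIdx B Vn P ∧ iIdx B Vn P ≤ m := by
  have hmem : m ∈ {i : ℕ | ¬ IsOrthoPair B (Vn i ⊓ P) P} := by
    simp only [Set.mem_setOf_eq, htop m le_rfl, top_inf_eq]
    exact hni
  have h1 : ¬ IsOrthoPair B (Vn (iIdx B Vn P) ⊓ P) P := Nat.sInf_mem ⟨m, hmem⟩
  have h2 : ∀ i' < iIdx B Vn P, IsOrthoPair B (Vn i' ⊓ P) P := by
    intro i' hi'
    by_contra hcon
    exact Nat.notMem_of_lt_sInf hi' hcon
  have h4 : iIdx B Vn P ≤ m := Nat.sInf_le hmem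
  have h3 : 1 ≤ iIdx B Vn P := by
    by_contra hcon
    have h0 : iIdx B Vn P = 0 := by omega
    rw [h0, hV0, bot_inf_eq] at h1
    apply h1
    intro v hv w hw
    have hv0 : v = 0 := by simpa using hv
    simp [hv0]
  exact ⟨h1, h2, h3, h4⟩

lemma aux_step_data (hB : IsSkew B) (hV0 : Vn 0 = ⊥) (htop : ∀ j, m ≤ j → Vn j = ⊤)
    (hmono : Monotone Vn) (hrank : ∀ j ≤ m, finrank 𝕜 (Vn j) = j)
    (hni : ¬ IsIsotropic B (pSeq B Vn k)) :
    ∃ z : V, z ∈ Vn (iIdx B Vn (pSeq B Vn k)) ∧ z ∈ pSeq B Vn k ∧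
      (∃ w ∈ pSeq B Vn k, B z w ≠ 0) ∧ z ∉ Vn (iIdx B Vn (pSeq B Vn k) - 1) ∧
      pSeq B Vn (k+1) = pSeq B Vn k ⊓ perpB B (𝕜 ∙ z) ∧
      Vn (iIdx B Vn (pSeq B Vn k)) ⊓ pSeq B Vn k
        = (Vn (iIdx B Vn (pSeq B Vn k) - 1) ⊓ pSeq B Vn k) ⊔ 𝕜 ∙ z := by
  obtain ⟨hnot, horth, h1i, him⟩ := aux_idx_spec hV0 htop (pSeq B Vn k) hni
  set P := pSeq B Vn k with hP
  set i := iIdx B Vn P with hi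
  unfold IsOrthoPair at hnot
  push_neg at hnot
  obtain ⟨z, hzR, w, hwP, hzw⟩ := hnot
  have hzV : z ∈ Vn i := hzR.1
  have hzP : z ∈ P := hzR.2
  have hzA : z ∉ Vn (i-1) := fun h => hzw (horth (i-1) (by omega) z ⟨h, hzP⟩ w hwP)
  have hAA : Vn (i-1) ≤ Vn i := hmono (by omega)
  have hfr : finrank 𝕜 (Vn i) ≤ finrank 𝕜 (Vn (i-1)) + 1 := by
    rw [hrank i him, hrank (i-1) (by omega)]
    omega
  have hR : Vn i ⊓ P = (Vn (i-1) ⊓ P) ⊔ 𝕜 ∙ z := by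
    symm
    apply Submodule.eq_of_le_of_finrank_le
    · exact sup_le (inf_le_inf_right P hAA)
        ((Submodule.span_singleton_le_iff_mem z _).mpr ⟨hzV, hzP⟩)
    · calc finrank 𝕜 ↥(Vn i ⊓ P) ≤ finrank 𝕜 ↥(Vn (i-1) ⊓ P) + 1 :=
            aux_finrank_inf_le hAA hfr
        _ = finrank 𝕜 ↥((Vn (i-1) ⊓ P) ⊔ 𝕜 ∙ z) :=
            (aux_finrank_sup_line (fun h => hzA (Submodule.mem_inf.mp h).1)).symm
  have hker : pSeq B Vn (k+1) = P ⊓ perpB B (𝕜 ∙ z) := by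
    show pStep B Vn P = P ⊓ perpB B (𝕜 ∙ z)
    unfold pStep
    ext x
    simp only [Submodule.mem_inf]
    constructor
    · rintro ⟨hperp, hxP⟩
      exact ⟨hxP, aux_mem_perpB_span.mpr (hperp z hzR)⟩
    · rintro ⟨hxP, hxz⟩
      refine ⟨?_, hxP⟩
      intro v hv
      rw [← hi, hR] at hv
      obtain ⟨a, ha, s, hs, rfl⟩ := Submodule.mem_sup.mp hv
      obtain ⟨c, rfl⟩ := Submodule.mem_span_singleton.mp hs
      have hax : B a x = 0 := horth (i-1) (by omega) a ha x hxP
      have hzx : B z x = 0 := aux_mem_perpB_span.mp hxz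
      simp [map_add, hax, hzx]
  exact ⟨z, hzV, hzP, ⟨w, hwP, hzw⟩, hzA, hker, hR⟩

lemma aux_finrank_pSeq (hB : IsSkew B) (hV0 : Vn 0 = ⊥) (htop : ∀ j, m ≤ j → Vn j = ⊤)
    (hmono : Monotone Vn) (hrank : ∀ j ≤ m, finrank 𝕜 (Vn j) = j)
    (hm : finrank 𝕜 V = m) (hd2 : ¬ IsIsotropic B (pSeq B Vn (d - 1))) :
    ∀ k ≤ d, finrank 𝕜 (pSeq B Vn k) + k = m := by
  intro k hk
  induction k with
  | zero =>
    have h0 : pSeq B Vn 0 = (⊤ : Submodule 𝕜 V) := rfl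
    rw [h0, finrank_top, hm]
    omega
  | succ n ih =>
    have hni := aux_notIso hV0 hd2 n (by omega)
    obtain ⟨z, hzV, hzP, hw, hzA, hker, hR⟩ := aux_step_data hB hV0 htop hmono hrank hni
    have heq : finrank 𝕜 (pSeq B Vn n) = finrank 𝕜 (pSeq B Vn (n+1)) + 1 := by
      rw [hker]
      exact aux_finrank_ker_eq hw
    have ihh := ih (by omega)
    omega

lemma aux_M_chain (hB : IsSkew B) (hV0 : Vn 0 = ⊥) (htop : ∀ j, m ≤ j → Vn j = ⊤)
    (hmono : Monotone Vn) (hrank : ∀ j ≤ m, finrank 𝕜 (Vn j) = j)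
    (hd2 : ¬ IsIsotropic B (pSeq B Vn (d - 1))) :
    ∀ k ≤ d, finrank 𝕜 (nullSpace B) + k
      ≤ finrank 𝕜 ↥(perpB B (pSeq B Vn k) ⊓ pSeq B Vn k) := by
  intro k hk
  induction k with
  | zero =>
    have h0 : pSeq B Vn 0 = (⊤ : Submodule 𝕜 V) := rfl
    rw [h0, inf_top_eq]
    simp [nullSpace]
    exact le_rfl
  | succ n ih =>
    have hni := aux_notIso hV0 hd2 n (by omega)
    obtain ⟨z, hzV, hzP, ⟨w, hwP, hzw⟩, hzA, hker, hR⟩ :=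
      aux_step_data hB hV0 htop hmono hrank hni
    set M := perpB B (pSeq B Vn n) ⊓ pSeq B Vn n with hM
    set M' := perpB B (pSeq B Vn (n+1)) ⊓ pSeq B Vn (n+1) with hM'
    have hsucc_le : pSeq B Vn (n+1) ≤ pSeq B Vn n := aux_pSeq_succ_le
    have hMle : M ≤ M' := by
      rintro x ⟨hx1, hx2⟩
      constructor
      · intro v hv
        exact hx1 v (hsucc_le hv)
      · rw [hker]
        exact ⟨hx2, aux_mem_perpB_span.mpr (hx1 z hzP)⟩
    have hzM' : z ∈ M' := by
      constructor
      · intro v hv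
        rw [hker] at hv
        exact aux_skew_zero hB (aux_mem_perpB_span.mp hv.2)
      · rw [hker]
        exact ⟨hzP, aux_mem_perpB_span.mpr (aux_skew_self hB z)⟩
    have hzM : z ∉ M := fun h => hzw (aux_skew_zero hB (h.1 w hwP))
    have hle2 : M ⊔ (𝕜 ∙ z) ≤ M' := sup_le hMle ((Submodule.span_singleton_le_iff_mem z _).mpr hzM')
    have h3 : finrank 𝕜 ↥M + 1 ≤ finrank 𝕜 ↥M' := by
      rw [← aux_finrank_sup_line hzM]
      exact Submodule.finrank_mono hle2
    have ihh := ih (by omega)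
    omega

lemma aux_d_bound (hB : IsSkew B) (hV0 : Vn 0 = ⊥) (htop : ∀ j, m ≤ j → Vn j = ⊤)
    (hmono : Monotone Vn) (hrank : ∀ j ≤ m, finrank 𝕜 (Vn j) = j)
    (hd2 : ¬ IsIsotropic B (pSeq B Vn (d - 1))) (hd3 : IsIsotropic B (pSeq B Vn d)) :
    finrank 𝕜 (nullSpace B) + d ≤ finrank 𝕜 (pSeq B Vn d) := by
  have hMd : perpB B (pSeq B Vn d) ⊓ pSeq B Vn d = pSeq B Vn d := by
    apply inf_eq_right.mpr
    intro x hx v hv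
    exact hd3 v hv x hx
  have := aux_M_chain hB hV0 htop hmono hrank hd2 d le_rfl
  rwa [hMd] at this

lemma aux_iso_bound (hB : IsSkew B) {W : Submodule 𝕜 V} (hW : IsIsotropic B W) :
    finrank 𝕜 W + finrank 𝕜 W ≤ finrank 𝕜 V + finrank 𝕜 (nullSpace B) := by
  obtain ⟨U, hU⟩ := Submodule.exists_isCompl (W ⊔ nullSpace B)
  set Φ : ↥W →ₗ[𝕜] (↥U →ₗ[𝕜] 𝕜) :=
    { toFun := fun w => (B w.1).toLinearMap.comp U.subtype
      map_add' := by
        intro a b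
        ext u
        simp [map_add]
      map_smul' := by
        intro c a
        ext u
        simp } with hΦ
  have hker : LinearMap.ker Φ ≤ Submodule.comap W.subtype (nullSpace B ⊓ W) := by
    intro w hw
    have hU0 : ∀ u ∈ U, B w.1 u = 0 := by
      intro u hu
      have := LinearMap.congr_fun (LinearMap.mem_ker.mp hw) ⟨u, hu⟩
      simpa [hΦ] using this
    have hWN : ∀ s ∈ W ⊔ nullSpace B, B w.1 s = 0 := by
      intro s hs
      obtain ⟨s1, hs1, s2, hs2, rfl⟩ := Submodule.mem_sup.mp hs
      have e1 : B w.1 s1 = 0 := hW w.1 w.2 s1 hs1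
      have e2 : B w.1 s2 = 0 := aux_mem_nullSpace.mp hs2 w.1
      simp [e1, e2]
    have hall : ∀ v : V, B w.1 v = 0 := by
      intro v
      have hv : v ∈ (W ⊔ nullSpace B) ⊔ U := by rw [hU.sup_eq_top]; trivial
      obtain ⟨s, hs, u, hu, rfl⟩ := Submodule.mem_sup.mp hv
      simp [hWN s hs, hU0 u hu]
    refine Submodule.mem_comap.mpr ⟨?_, w.2⟩
    exact aux_mem_nullSpace.mpr (fun v => aux_skew_zero hB (hall v))
  have h1 := LinearMap.finrank_range_add_finrank_ker Φ
  have h2 : finrank 𝕜 ↥(LinearMap.ker Φ) ≤ finrank 𝕜 ↥(nullSpace B ⊓ W) := by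
    calc finrank 𝕜 ↥(LinearMap.ker Φ)
        ≤ finrank 𝕜 ↥(Submodule.comap W.subtype (nullSpace B ⊓ W)) := Submodule.finrank_mono hker
      _ = finrank 𝕜 ↥(nullSpace B ⊓ W) :=
          (Submodule.comapSubtypeEquivOfLe inf_le_right).finrank_eq
  have h3 : finrank 𝕜 ↥(LinearMap.range Φ) ≤ finrank 𝕜 U := by
    have := Submodule.finrank_le (LinearMap.range Φ)
    have hdual : finrank 𝕜 (↥U →ₗ[𝕜] 𝕜) = finrank 𝕜 U := Subspace.dual_finrank_eq
    omega
  have h4 : finrank 𝕜 U + finrank 𝕜 ↥(W ⊔ nullSpace B) = finrank 𝕜 V :=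
    Submodule.finrank_add_eq_of_isCompl hU.symm
  have h5 : finrank 𝕜 W ≤ finrank 𝕜 ↥(W ⊔ nullSpace B) := Submodule.finrank_mono le_sup_left
  have h6 : finrank 𝕜 ↥(nullSpace B ⊓ W) ≤ finrank 𝕜 (nullSpace B) :=
    Submodule.finrank_mono inf_le_left
  omega

lemma aux_null_le : ∀ k, nullSpace B ≤ pSeq B Vn k := by
  intro k
  induction k with
  | zero => exact le_top
  | succ n ih =>
    intro x hx
    exact ⟨fun v _ => aux_mem_nullSpace.mp hx v, ih hx⟩

lemma aux_nullIn_le_pSeq (hB : IsSkew B) (hV0 : Vn 0 = ⊥) (htop : ∀ j, m ≤ j → Vn j = ⊤)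
    (hmono : Monotone Vn) (hd2 : ¬ IsIsotropic B (pSeq B Vn (d - 1))) :
    ∀ k ≤ d, ∀ j, nullIn B (Vn j) ≤ pSeq B Vn k := by
  intro k hk
  induction k with
  | zero => intro j; exact le_top
  | succ n ih =>
    intro j x hx
    have hni := aux_notIso hV0 hd2 n (by omega)
    obtain ⟨hnot, horth, h1i, him⟩ := aux_idx_spec hV0 htop (pSeq B Vn n) hni
    have hxP : x ∈ pSeq B Vn n := ih (by omega) j hx
    refine (⟨?_, hxP⟩ : x ∈ pStep B Vn (pSeq B Vn n))
    intro v hv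
    by_cases hij : iIdx B Vn (pSeq B Vn n) ≤ j
    · exact hx.1 v (hmono hij hv.1)
    · have hxj : x ∈ Vn j ⊓ pSeq B Vn n := ⟨hx.2, hxP⟩
      exact aux_skew_zero hB (horth j (by omega) x hxj v hv.2)

lemma aux_lagSum_le_pSeq (hB : IsSkew B) (hV0 : Vn 0 = ⊥) (htop : ∀ j, m ≤ j → Vn j = ⊤)
    (hmono : Monotone Vn) (hd2 : ¬ IsIsotropic B (pSeq B Vn (d - 1))) :
    lagSumN m Vn B ≤ pSeq B Vn d := by
  unfold lagSumN
  refine Finset.sum_induction _ (fun S => S ≤ pSeq B Vn d) ?_ ?_ ?_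
  · intro a b ha hb
    rw [Submodule.add_eq_sup]
    exact sup_le ha hb
  · rw [Submodule.zero_eq_bot]
    exact bot_le
  · intro j _
    exact aux_nullIn_le_pSeq hB hV0 htop hmono hd2 d le_rfl j

lemma aux_nullIn_top (htop : ∀ j, m ≤ j → Vn j = ⊤) :
    nullIn B (Vn m) = nullSpace B := by
  rw [nullIn, htop m le_rfl, inf_top_eq]
  rfl

lemma aux_null_le_lagSum (htop : ∀ j, m ≤ j → Vn j = ⊤) (hm1 : 1 ≤ m) :
    nullSpace B ≤ lagSumN m Vn B := by
  rw [← aux_nullIn_top (Vn := Vn) htop]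
  exact Finset.single_le_sum (f := fun j => nullIn B (Vn j))
    (fun i _ => by rw [Submodule.zero_eq_bot]; exact bot_le)
    (Finset.mem_Icc.mpr ⟨hm1, le_rfl⟩)

lemma aux_idx_lt (hB : IsSkew B) (hV0 : Vn 0 = ⊥) (htop : ∀ j, m ≤ j → Vn j = ⊤)
    (hmono : Monotone Vn) (hrank : ∀ j ≤ m, finrank 𝕜 (Vn j) = j)
    (hd2 : ¬ IsIsotropic B (pSeq B Vn (d - 1))) :
    ∀ k, k + 1 < d → iIdx B Vn (pSeq B Vn k) < iIdx B Vn (pSeq B Vn (k+1)) := by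
  intro k hk
  have hni := aux_notIso hV0 hd2 k (by omega)
  have hni' := aux_notIso hV0 hd2 (k+1) hk
  obtain ⟨hnot, horth, h1i, him⟩ := aux_idx_spec hV0 htop (pSeq B Vn k) hni
  obtain ⟨z, hzV, hzP, hw, hzA, hker, hR⟩ := aux_step_data hB hV0 htop hmono hrank hni
  obtain ⟨hnot', horth', h1i', him'⟩ := aux_idx_spec hV0 htop (pSeq B Vn (k+1)) hni'
  by_contra hcon
  push_neg at hcon
  apply hnot'
  intro v hv w' hw'
  have hvR : v ∈ Vn (iIdx B Vn (pSeq B Vn k)) ⊓ pSeq B Vn k :=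
    ⟨hmono hcon hv.1, aux_pSeq_succ_le hv.2⟩
  rw [hR] at hvR
  obtain ⟨a, ha, s, hs, rfl⟩ := Submodule.mem_sup.mp hvR
  obtain ⟨c, rfl⟩ := Submodule.mem_span_singleton.mp hs
  have h1 : B a w' = 0 := horth _ (by omega) a ha w' (aux_pSeq_succ_le hw')
  have h2 : B z w' = 0 := by
    have hw2 := hw'
    rw [hker] at hw2
    exact aux_mem_perpB_span.mp hw2.2
  simp [map_add, h1, h2]

lemma aux_jump_null (hB : IsSkew B) (hV0 : Vn 0 = ⊥) (htop : ∀ j, m ≤ j → Vn j = ⊤)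
    (hmono : Monotone Vn) (hrank : ∀ j ≤ m, finrank 𝕜 (Vn j) = j)
    (hd2 : ¬ IsIsotropic B (pSeq B Vn (d - 1))) :
    ∀ k < d, iIdx B Vn (pSeq B Vn k) ∈ jumpSetN m Vn (nullSpace B) := by
  intro k hk
  have hni := aux_notIso hV0 hd2 k hk
  obtain ⟨hnot, horth, h1i, him⟩ := aux_idx_spec hV0 htop (pSeq B Vn k) hni
  obtain ⟨z, hzV, hzP, ⟨w, hwP, hzw⟩, hzA, hker, hR⟩ :=
    aux_step_data hB hV0 htop hmono hrank hni
  refine ⟨h1i, him, ?_⟩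
  intro hle
  obtain ⟨a, ha, n, hn, hzan⟩ := Submodule.mem_sup.mp (hle hzV)
  have hnw : B n w = 0 := aux_skew_zero hB (aux_mem_nullSpace.mp hn w)
  have haP : a ∈ pSeq B Vn k := by
    have hnP : n ∈ pSeq B Vn k := aux_null_le k hn
    have ha' : a = z - n := eq_sub_of_add_eq hzan
    rw [ha']
    exact Submodule.sub_mem _ hzP hnP
  have haw : B a w = 0 := horth _ (by omega) a ⟨ha, haP⟩ w hwP
  apply hzw
  rw [← hzan]
  simp [map_add, haw, hnw]

lemma aux_idx_mono (hB : IsSkew B) (hV0 : Vn 0 = ⊥) (htop : ∀ j, m ≤ j → Vn j = ⊤)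
    (hmono : Monotone Vn) (hrank : ∀ j ≤ m, finrank 𝕜 (Vn j) = j)
    (hd2 : ¬ IsIsotropic B (pSeq B Vn (d - 1))) :
    ∀ a b, a < b → b < d → iIdx B Vn (pSeq B Vn a) < iIdx B Vn (pSeq B Vn b) := by
  intro a b hab hbd
  induction b with
  | zero => omega
  | succ n ih =>
    rcases Nat.lt_succ_iff_lt_or_eq.mp hab with h | h
    · exact lt_trans (ih h (by omega)) (aux_idx_lt hB hV0 htop hmono hrank hd2 n hbd)
    · exact h ▸ aux_idx_lt hB hV0 htop hmono hrank hd2 n hbd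

lemma aux_descent (hB : IsSkew B) (hV0 : Vn 0 = ⊥) (htop : ∀ j, m ≤ j → Vn j = ⊤)
    (hmono : Monotone Vn) (hrank : ∀ j ≤ m, finrank 𝕜 (Vn j) = j)
    (hd2 : ¬ IsIsotropic B (pSeq B Vn (d - 1))) {k : ℕ} (hk : k < d) :
    ∀ l ≤ k, ∀ x ∈ Vn (iIdx B Vn (pSeq B Vn k)),
      (∀ u ∈ Vn (iIdx B Vn (pSeq B Vn k)) ⊓ pSeq B Vn l, B x u = 0) →
      ∃ c ∈ Vn (iIdx B Vn (pSeq B Vn k) - 1),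
        ∀ u ∈ Vn (iIdx B Vn (pSeq B Vn k)), B (x - c) u = 0 := by
  set j := iIdx B Vn (pSeq B Vn k) with hj
  intro l
  induction l with
  | zero =>
    intro _ x hx hxperp
    refine ⟨0, Submodule.zero_mem _, ?_⟩
    intro u hu
    simpa using hxperp u ⟨hu, trivial⟩
  | succ l ih =>
    intro hlk x hx hxperp
    have hld : l < d := by omega
    have hni := aux_notIso hV0 hd2 l hld
    obtain ⟨z, hzV, hzP, hwz, hzA, hker, hR⟩ := aux_step_data hB hV0 htop hmono hrank hni
    have hil : iIdx B Vn (pSeq B Vn l) < j :=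
      aux_idx_mono hB hV0 htop hmono hrank hd2 l k (by omega) hk
    have hzVj1 : z ∈ Vn (j - 1) := hmono (by omega) hzV
    have hzVj : z ∈ Vn j := hmono (by omega) hzV
    by_cases hcase : ∀ y ∈ Vn j ⊓ pSeq B Vn l, B z y = 0
    · apply ih (by omega) x hx
      intro u hu
      apply hxperp
      refine ⟨hu.1, ?_⟩
      rw [hker]
      exact ⟨hu.2, aux_mem_perpB_span.mpr (hcase u hu)⟩
    · push_neg at hcase
      obtain ⟨y, hy, hzy⟩ := hcase
      set t : 𝕜 := B x y / B z y with ht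
      have hQ : Vn j ⊓ pSeq B Vn (l+1) = (Vn j ⊓ pSeq B Vn l) ⊓ perpB B (𝕜 ∙ z) := by
        rw [hker, ← inf_assoc]
      have hyn : y ∉ Vn j ⊓ pSeq B Vn (l+1) := by
        intro hcon
        rw [hQ] at hcon
        exact hzy (aux_mem_perpB_span.mp hcon.2)
      have hdec : Vn j ⊓ pSeq B Vn l = (Vn j ⊓ pSeq B Vn (l+1)) ⊔ (𝕜 ∙ y) := by
        symm
        apply Submodule.eq_of_le_of_finrank_le
        · exact sup_le (inf_le_inf_left _ aux_pSeq_succ_le)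
            ((Submodule.span_singleton_le_iff_mem y _).mpr hy)
        · have hk1 := aux_finrank_ker_le B (Vn j ⊓ pSeq B Vn l) z
          rw [← hQ] at hk1
          have hk2 := aux_finrank_sup_line (Q := Vn j ⊓ pSeq B Vn (l+1)) (z := y) hyn
          omega
      have hx' : ∀ u ∈ Vn j ⊓ pSeq B Vn l, B (x - t • z) u = 0 := by
        intro u hu
        rw [hdec] at hu
        obtain ⟨u₀, hu₀, s, hs, rfl⟩ := Submodule.mem_sup.mp hu
        obtain ⟨c, rfl⟩ := Submodule.mem_span_singleton.mp hs
        have e1 : B x u₀ = 0 := hxperp u₀ hu₀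
        have e2 : B z u₀ = 0 := by
          have h2 := hu₀
          rw [hQ] at h2
          exact aux_mem_perpB_span.mp h2.2
        have e3 : B x y - t * B z y = 0 := by
          rw [ht, div_mul_cancel₀ _ hzy, sub_self]
        have hexp : B (x - t • z) (u₀ + c • y)
            = (B x u₀ - t * B z u₀) + c * (B x y - t * B z y) := by
          simp only [map_sub, map_add, map_smul, ContinuousLinearMap.sub_apply,
            ContinuousLinearMap.smul_apply, smul_eq_mul]
          try ring
        rw [hexp, e1, e2, e3]
        ring
      obtain ⟨c', hc', hfin⟩ := ih (by omega) (x - t • z)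
        (Submodule.sub_mem _ hx (Submodule.smul_mem _ _ hzVj)) hx'
      refine ⟨t • z + c', Submodule.add_mem _ (Submodule.smul_mem _ _ hzVj1) hc', ?_⟩
      intro u hu
      rw [sub_add_eq_sub_sub]
      exact hfin u hu

lemma aux_not_jump_p (hB : IsSkew B) (hV0 : Vn 0 = ⊥) (htop : ∀ j, m ≤ j → Vn j = ⊤)
    (hmono : Monotone Vn) (hrank : ∀ j ≤ m, finrank 𝕜 (Vn j) = j)
    (hd2 : ¬ IsIsotropic B (pSeq B Vn (d - 1))) {k : ℕ} (hk : k < d) :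
    Vn (iIdx B Vn (pSeq B Vn k)) ≤ Vn (iIdx B Vn (pSeq B Vn k) - 1) ⊔ lagSumN m Vn B := by
  have hni := aux_notIso hV0 hd2 k hk
  obtain ⟨hnot, horth, h1i, him⟩ := aux_idx_spec hV0 htop (pSeq B Vn k) hni
  obtain ⟨z, hzV, hzP, hwz, hzA, hker, hR⟩ := aux_step_data hB hV0 htop hmono hrank hni
  set j := iIdx B Vn (pSeq B Vn k) with hj
  have hzperp : ∀ u ∈ Vn j ⊓ pSeq B Vn k, B z u = 0 := by
    intro u hu
    rw [hR] at hu
    obtain ⟨a, ha, s, hs, rfl⟩ := Submodule.mem_sup.mp hu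
    obtain ⟨c, rfl⟩ := Submodule.mem_span_singleton.mp hs
    have e1 : B z a = 0 := aux_skew_zero hB (horth _ (by omega) a ha z hzP)
    have e2 : B z z = 0 := aux_skew_self hB z
    simp [map_add, e1, e2]
  obtain ⟨c, hc, hn⟩ :=
    aux_descent hB hV0 htop hmono hrank hd2 hk k le_rfl z hzV hzperp
  set n := z - c with hndef
  have hnV : n ∈ Vn j := Submodule.sub_mem _ hzV (hmono (by omega) hc)
  have hnN : n ∈ nullIn B (Vn j) := ⟨fun v hv => aux_skew_zero hB (hn v hv), hnV⟩
  have hnA : n ∉ Vn (j - 1) := by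
    intro hcon
    apply hzA
    have hz' : z = n + c := (sub_add_cancel z c).symm
    rw [hz']
    exact Submodule.add_mem _ hcon hc
  have hVj : Vn j = Vn (j - 1) ⊔ (𝕜 ∙ n) := by
    symm
    apply Submodule.eq_of_le_of_finrank_le
    · exact sup_le (hmono (by omega)) ((Submodule.span_singleton_le_iff_mem n _).mpr hnV)
    · rw [aux_finrank_sup_line hnA, hrank j him, hrank (j-1) (by omega)]
      omega
  rw [hVj]
  refine sup_le_sup le_rfl ?_
  refine (Submodule.span_singleton_le_iff_mem n _).mpr ?_
  have hle : nullIn B (Vn j) ≤ lagSumN m Vn B :=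
    Finset.single_le_sum (f := fun i => nullIn B (Vn i))
      (fun i _ => by rw [Submodule.zero_eq_bot]; exact bot_le)
      (Finset.mem_Icc.mpr ⟨h1i, him⟩)
  exact hle hnN

lemma aux_finrank_sup_line_le (Q : Submodule 𝕜 V) (z : V) :
    finrank 𝕜 ↥(Q ⊔ (𝕜 ∙ z)) ≤ finrank 𝕜 Q + 1 := by
  by_cases hz : z ∈ Q
  · rw [sup_eq_left.mpr ((Submodule.span_singleton_le_iff_mem z Q).mpr hz)]
    omega
  · exact (aux_finrank_sup_line hz).le

lemma aux_jump_card (hV0 : Vn 0 = ⊥) (hmono : Monotone Vn)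
    (hrank : ∀ j ≤ m, finrank 𝕜 (Vn j) = j) (htop : ∀ j, m ≤ j → Vn j = ⊤)
    (hm : finrank 𝕜 V = m) (W : Submodule 𝕜 V) :
    (jumpSetN m Vn W).ncard + finrank 𝕜 W = m := by
  classical
  have key : ∀ n ≤ m, ((Finset.Icc 1 n).filter (fun jj => ¬ Vn jj ≤ Vn (jj-1) ⊔ W)).card
      + finrank 𝕜 W = finrank 𝕜 ↥(Vn n ⊔ W) := by
    intro n hn
    induction n with
    | zero =>
      rw [hV0, bot_sup_eq]
      simp
    | succ n ih =>
      have hicc : Finset.Icc 1 (n+1) = insert (n+1) (Finset.Icc 1 n) :=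
        (Finset.insert_Icc_right_eq_Icc_add_one (by omega)).symm
      rw [hicc, Finset.filter_insert]
      have ihh := ih (by omega)
      by_cases hc : Vn (n+1) ≤ Vn ((n+1) - 1) ⊔ W
      · rw [if_neg (not_not.mpr hc)]
        have hsup : Vn (n+1) ⊔ W = Vn n ⊔ W := by
          apply le_antisymm
          · exact sup_le (by simpa using hc) le_sup_right
          · exact sup_le_sup (hmono (by omega)) le_rfl
        rw [hsup]
        exact ihh
      · rw [if_pos hc]
        rw [Finset.card_insert_of_notMem (by simp)]
        have hlt : Vn n ⊔ W < Vn (n+1) ⊔ W := by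
          refine lt_of_le_of_ne (sup_le_sup (hmono (by omega)) le_rfl) (fun h => hc ?_)
          have h1 : Vn (n+1) ≤ Vn (n+1) ⊔ W := le_sup_left
          rw [← h] at h1
          simpa using h1
        have hge : finrank 𝕜 ↥(Vn n ⊔ W) < finrank 𝕜 ↥(Vn (n+1) ⊔ W) :=
          Submodule.finrank_lt_finrank_of_lt hlt
        have hle : finrank 𝕜 ↥(Vn (n+1) ⊔ W) ≤ finrank 𝕜 ↥(Vn n ⊔ W) + 1 := by
          have hnle : ¬ Vn (n+1) ≤ Vn n := by
            intro h
            have h2 : finrank 𝕜 (Vn (n+1)) ≤ finrank 𝕜 (Vn n) := Submodule.finrank_mono h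
            rw [hrank (n+1) hn, hrank n (by omega)] at h2
            omega
          obtain ⟨e, he1, he2⟩ := SetLike.not_le_iff_exists.mp hnle
          have hVn1 : Vn (n+1) = Vn n ⊔ (𝕜 ∙ e) := by
            symm
            apply Submodule.eq_of_le_of_finrank_le
            · exact sup_le (hmono (by omega)) ((Submodule.span_singleton_le_iff_mem e _).mpr he1)
            · have := aux_finrank_sup_line he2
              rw [this, hrank (n+1) hn, hrank n (by omega)]
          rw [hVn1, sup_right_comm]
          exact aux_finrank_sup_line_le _ e
        omega
  have hfin := key m le_rfl
  rw [htop m le_rfl, top_sup_eq, finrank_top, hm] at hfin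
  have hset : jumpSetN m Vn W
      = ↑((Finset.Icc 1 m).filter fun jj => ¬ Vn jj ≤ Vn (jj-1) ⊔ W) := by
    ext jj
    simp [jumpSetN, Finset.mem_filter, Finset.mem_Icc, and_assoc]
  rw [hset, Set.ncard_coe_finset]
  exact hfin

/-- With `d` the stopping index of the inductive construction (`p^{d-1}(B)`
not `B`-isotropic, `p^d(B)` `B`-isotropic) and `i_k := iIdx B Vn (p^{k-1}(B))`, the
mapping `{1, …, d} → jump N(B) ∖ jump p(B)`, `k ↦ i_k`, is a well-defined increasing
bijection. -/
theorem iIdx_bijOn_jump_diff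
    (m : ℕ) (hm : finrank 𝕜 V = m)
    (Vn : ℕ → Submodule 𝕜 V) (hV0 : Vn 0 = ⊥) (hmono : Monotone Vn)
    (hrank : ∀ j ≤ m, finrank 𝕜 (Vn j) = j) (htop : ∀ j, m ≤ j → Vn j = ⊤)
    (B : V →L[𝕜] V →L[𝕜] 𝕜) (hB : IsSkew B) (hB0 : B ≠ 0)
    (d : ℕ) (hd1 : 1 ≤ d) (hdm : d ≤ m)
    (hd2 : ¬ IsIsotropic B (pSeq B Vn (d - 1)))
    (hd3 : IsIsotropic B (pSeq B Vn d)) :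
    StrictMonoOn (fun k => iIdx B Vn (pSeq B Vn (k - 1))) (Set.Icc 1 d) ∧
    Set.BijOn (fun k => iIdx B Vn (pSeq B Vn (k - 1))) (Set.Icc 1 d)
      (jumpSetN m Vn (nullSpace B) \ jumpSetN m Vn (lagSumN m Vn B)) := by
  classical
  have hm1 : 1 ≤ m := le_trans hd1 hdm
  have hsm : StrictMonoOn (fun k => iIdx B Vn (pSeq B Vn (k - 1))) (Set.Icc 1 d) := by
    intro a ha b hb hab
    obtain ⟨ha1, ha2⟩ := Set.mem_Icc.mp ha
    obtain ⟨hb1, hb2⟩ := Set.mem_Icc.mp hb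
    exact aux_idx_mono hB hV0 htop hmono hrank hd2 (a-1) (b-1) (by omega) (by omega)
  have hinj := hsm.injOn
  have hmaps : Set.MapsTo (fun k => iIdx B Vn (pSeq B Vn (k - 1))) (Set.Icc 1 d)
      (jumpSetN m Vn (nullSpace B) \ jumpSetN m Vn (lagSumN m Vn B)) := by
    intro a ha
    obtain ⟨ha1, ha2⟩ := Set.mem_Icc.mp ha
    have hlt : a - 1 < d := by omega
    constructor
    · exact aux_jump_null hB hV0 htop hmono hrank hd2 (a-1) hlt
    · intro hcon
      exact hcon.2.2 (aux_not_jump_p hB hV0 htop hmono hrank hd2 hlt)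
  have hcardN := aux_jump_card hV0 hmono hrank htop hm (nullSpace B)
  have hcardp := aux_jump_card hV0 hmono hrank htop hm (lagSumN m Vn B)
  have hNlep : nullSpace B ≤ lagSumN m Vn B := aux_null_le_lagSum htop hm1
  have hsub : jumpSetN m Vn (lagSumN m Vn B) ⊆ jumpSetN m Vn (nullSpace B) := by
    intro jj hjj
    refine ⟨hjj.1, hjj.2.1, fun hcon => hjj.2.2 ?_⟩
    exact le_trans hcon (sup_le_sup le_rfl hNlep)
  have hPd : finrank 𝕜 (pSeq B Vn d) + d = m :=
    aux_finrank_pSeq hB hV0 htop hmono hrank hm hd2 d le_rfl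
  have hlow : finrank 𝕜 (nullSpace B) + d ≤ finrank 𝕜 (pSeq B Vn d) :=
    aux_d_bound hB hV0 htop hmono hrank hd2 hd3
  have hup : finrank 𝕜 (pSeq B Vn d) + finrank 𝕜 (pSeq B Vn d)
      ≤ finrank 𝕜 V + finrank 𝕜 (nullSpace B) := aux_iso_bound hB hd3
  rw [hm] at hup
  have hple : finrank 𝕜 (lagSumN m Vn B) ≤ finrank 𝕜 (pSeq B Vn d) :=
    Submodule.finrank_mono (aux_lagSum_le_pSeq hB hV0 htop hmono hd2)
  have hNp : finrank 𝕜 (nullSpace B) ≤ finrank 𝕜 (lagSumN m Vn B) :=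
    Submodule.finrank_mono hNlep
  have hfinN : (jumpSetN m Vn (nullSpace B)).Finite := by
    apply Set.Finite.subset (Set.finite_Icc 1 m)
    intro jj hjj
    exact Set.mem_Icc.mpr ⟨hjj.1, hjj.2.1⟩
  have hdiff : (jumpSetN m Vn (nullSpace B) \ jumpSetN m Vn (lagSumN m Vn B)).ncard
      = (jumpSetN m Vn (nullSpace B)).ncard - (jumpSetN m Vn (lagSumN m Vn B)).ncard :=
    Set.ncard_diff hsub (hfinN.subset hsub)
  have hdle : (jumpSetN m Vn (nullSpace B) \ jumpSetN m Vn (lagSumN m Vn B)).ncard ≤ d := by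
    rw [hdiff]
    omega
  have himgcard : ((fun k => iIdx B Vn (pSeq B Vn (k - 1))) '' Set.Icc 1 d).ncard = d := by
    rw [Set.ncard_image_of_injOn hinj,
      show Set.Icc 1 d = ↑(Finset.Icc 1 d) from (Finset.coe_Icc 1 d).symm,
      Set.ncard_coe_finset, Nat.card_Icc]
    omega
  have heq : (fun k => iIdx B Vn (pSeq B Vn (k - 1))) '' Set.Icc 1 d
      = jumpSetN m Vn (nullSpace B) \ jumpSetN m Vn (lagSumN m Vn B) := by
    exact Set.eq_of_subset_of_ncard_le hmaps.image_subset
      (by rw [himgcard]; exact hdle) (hfinN.diff)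
  refine ⟨hsm, hmaps, hinj, ?_⟩
  intro x hx
  rw [← heq] at hx
  exact hx
end
end

section
/- With V, the complete flag {0} = V₀ ⊊ ⋯ ⊊ V_m = V, B ∈ (∧²V)* ∖ {0}, the indices j_k := min{j : V_j ∩ p^{k−1}(B) ⊄ p^k(B)} from the inductive construction, d the stopping index, and p(B) := N(B|_{V₁×V₁}) + ⋯ + N(B|_{V_m×V_m}), the mapping {1, …, d} → jump p(B), k ↦ j_k, is a well-defined bijection. -/
open Module Filter Topology

noncomputable section

variable {𝕜 : Type} [RCLike 𝕜]

variable {V : Type} [NormedAddCommGroup V] [InnerProductSpace 𝕜 V] [FiniteDimensional 𝕜 V]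

namespace Statement17
set_option linter.unusedSectionVars false

variable {B : V →L[𝕜] V →L[𝕜] 𝕜} {Vn : ℕ → Submodule 𝕜 V}

lemma mem_perpB {S : Submodule 𝕜 V} {w : V} : w ∈ perpB B S ↔ ∀ v ∈ S, B v w = 0 :=
  Iff.rfl

lemma perpB_antitone {S T : Submodule 𝕜 V} (h : S ≤ T) : perpB B T ≤ perpB B S :=
  fun w hw v hv => hw v (h hv)

lemma perpB_bot : perpB B (⊥ : Submodule 𝕜 V) = ⊤ := by
  ext w
  simp only [Submodule.mem_top, iff_true, mem_perpB]
  rintro v hv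
  rw [Submodule.mem_bot] at hv
  simp [hv]

lemma skew_apply_self (hB : IsSkew B) (x : V) : B x x = 0 := by
  have h := hB x x
  have h2 : (2 : 𝕜) * B x x = 0 := by
    rw [two_mul]
    nth_rewrite 1 [h]
    ring
  exact (mul_eq_zero.mp h2).resolve_left two_ne_zero

lemma skew_eq_zero_symm (hB : IsSkew B) {x y : V} (h : B x y = 0) : B y x = 0 := by
  rw [hB y x, h, neg_zero]

lemma perpB_span_singleton (u : V) : perpB B (Submodule.span 𝕜 {u}) =
    LinearMap.ker (B u : V →ₗ[𝕜] 𝕜) := by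
  ext w
  simp only [LinearMap.mem_ker, ContinuousLinearMap.coe_coe, mem_perpB]
  constructor
  · intro h
    exact h u (Submodule.mem_span_singleton_self u)
  · intro h v hv
    obtain ⟨c, rfl⟩ := Submodule.mem_span_singleton.mp hv
    simp [h]

lemma finrank_inf_ker (φ : V →L[𝕜] 𝕜) (W : Submodule 𝕜 V) :
    finrank 𝕜 W ≤ finrank 𝕜 (W ⊓ LinearMap.ker (φ : V →ₗ[𝕜] 𝕜) : Submodule 𝕜 V) + 1 := by
  have h1 := LinearMap.finrank_range_add_finrank_ker ((φ : V →ₗ[𝕜] 𝕜).domRestrict W)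
  have h2 : finrank 𝕜 (LinearMap.range ((φ : V →ₗ[𝕜] 𝕜).domRestrict W)) ≤ 1 := by
    simpa using Submodule.finrank_le (LinearMap.range ((φ : V →ₗ[𝕜] 𝕜).domRestrict W))
  have h3 : LinearMap.ker ((φ : V →ₗ[𝕜] 𝕜).domRestrict W)
      = Submodule.comap W.subtype (LinearMap.ker (φ : V →ₗ[𝕜] 𝕜)) := by
    ext x; simp [LinearMap.mem_ker]
  have h4 : finrank 𝕜 (Submodule.comap W.subtype (LinearMap.ker (φ : V →ₗ[𝕜] 𝕜)))
      = finrank 𝕜 (W ⊓ LinearMap.ker (φ : V →ₗ[𝕜] 𝕜) : Submodule 𝕜 V) := by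
    conv_rhs => rw [← Submodule.map_comap_subtype]
    rw [Submodule.finrank_map_subtype_eq]
  have h6 : (W ⊓ LinearMap.ker (φ : V →ₗ[𝕜] 𝕜) : Submodule 𝕜 V)
      = (W ⊓ LinearMap.ker (φ : V →ₗ[𝕜] 𝕜) : Submodule 𝕜 V) := by
    apply le_antisymm <;> exact le_inf inf_le_left (fun x hx => by
      have := hx.2
      simpa [LinearMap.mem_ker] using this)
  rw [h6, ← h4, ← h3]
  omega

lemma finrank_inf_le_of_le {A P P' : Submodule 𝕜 V} (h : P' ≤ P)
    (hc : finrank 𝕜 P ≤ finrank 𝕜 P' + 1) :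
    finrank 𝕜 (A ⊓ P : Submodule 𝕜 V) ≤ finrank 𝕜 (A ⊓ P' : Submodule 𝕜 V) + 1 := by
  have e := Submodule.finrank_sup_add_finrank_inf_eq (A ⊓ P) P'
  have h1 : (A ⊓ P) ⊓ P' = A ⊓ P' := by rw [inf_assoc, inf_eq_right.mpr h]
  have h2 : (A ⊓ P) ⊔ P' ≤ P := sup_le inf_le_right h
  have h3 := Submodule.finrank_mono h2
  rw [h1] at e
  omega

lemma apply_add_smul (x u w : V) (c : 𝕜) :
    B (x + c • u) w = B x w + c * B u w := by
  simp [map_add, map_smul, smul_eq_mul]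

lemma apply_sub_smul (x u w : V) (c : 𝕜) :
    B w (x - c • u) = B w x - c * B w u := by
  simp [map_sub, map_smul, smul_eq_mul]

lemma pStep_of_isotropic (hV0 : Vn 0 = ⊥) {P : Submodule 𝕜 V} (h : IsIsotropic B P) :
    pStep B Vn P = P := by
  have hempty : {i : ℕ | ¬ IsOrthoPair B (Vn i ⊓ P) P} = ∅ := by
    ext i
    simp only [Set.mem_setOf_eq, Set.mem_empty_iff_false, iff_false, not_not]
    exact fun v hv w hw => h v hv.2 w hw
  have hi : iIdx B Vn P = 0 := by rw [iIdx, hempty]; exact Nat.sInf_empty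
  rw [pStep, hi, hV0, bot_inf_eq, perpB_bot, top_inf_eq]

/-- All facts about one non-isotropic step of the inductive construction. -/
structure StepFacts (B : V →L[𝕜] V →L[𝕜] 𝕜) (Vn : ℕ → Submodule 𝕜 V) (m : ℕ)
    (P : Submodule 𝕜 V) : Prop where
  le : pStep B Vn P ≤ P
  rank : finrank 𝕜 (pStep B Vn P) + 1 = finrank 𝕜 P
  lt_iff : ∀ j', Vn j' ⊓ P ≤ pStep B Vn P ↔ j' < jIdx B Vn P
  one_le : 1 ≤ jIdx B Vn P
  le_m : jIdx B Vn P ≤ m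
  dim_drop : ∀ j', finrank 𝕜 (Vn j' ⊓ pStep B Vn P : Submodule 𝕜 V)
      + (if jIdx B Vn P ≤ j' then 1 else 0) = finrank 𝕜 (Vn j' ⊓ P : Submodule 𝕜 V)
  nul : finrank 𝕜 (nullIn B (pStep B Vn P)) = finrank 𝕜 (nullIn B P) + 1
  ortho_lt : ∀ i' < iIdx B Vn P, IsOrthoPair B (Vn i' ⊓ P) P

lemma stepFacts (m : ℕ) (hV0 : Vn 0 = ⊥) (hmono : Monotone Vn)
    (hrank : ∀ j ≤ m, finrank 𝕜 (Vn j) = j) (htop : ∀ j, m ≤ j → Vn j = ⊤)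
    (hB : IsSkew B) {P : Submodule 𝕜 V} (hP : ¬ IsIsotropic B P) :
    StepFacts B Vn m P := by
  set i := iIdx B Vn P with hi_def
  have hmem_m : m ∈ {i : ℕ | ¬ IsOrthoPair B (Vn i ⊓ P) P} := by
    simp only [Set.mem_setOf_eq, htop m le_rfl, top_inf_eq]
    exact hP
  have hi_mem : ¬ IsOrthoPair B (Vn i ⊓ P) P := Nat.sInf_mem (⟨m, hmem_m⟩ : Set.Nonempty _)
  have hlt : ∀ i' < i, IsOrthoPair B (Vn i' ⊓ P) P := by
    intro i' hi'
    by_contra h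
    have hle : iIdx B Vn P ≤ i' := Nat.sInf_le h
    omega
  have hi_pos : 0 < i := by
    rcases Nat.eq_zero_or_pos i with h | h
    · exfalso
      apply hi_mem
      rw [h, hV0, bot_inf_eq]
      intro v hv
      simp only [Submodule.mem_bot] at hv
      simp [hv]
    · exact h
  have hi_le_m : i ≤ m := Nat.sInf_le hmem_m
  have horth : IsOrthoPair B (Vn (i - 1) ⊓ P) P := hlt (i - 1) (by omega)
  have hmono_i : Vn (i - 1) ≤ Vn i := hmono (by omega)
  -- the pivot u
  have hnle : ¬ (Vn i ⊓ P ≤ Vn (i - 1) ⊓ P) := by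
    intro hle
    exact hi_mem (fun v hv => horth v (hle hv))
  obtain ⟨u, hu_mem, hu_not⟩ := SetLike.not_le_iff_exists.mp hnle
  have hdim_i : finrank 𝕜 (Vn i ⊓ P : Submodule 𝕜 V)
      ≤ finrank 𝕜 (Vn (i - 1) ⊓ P : Submodule 𝕜 V) + 1 := by
    rw [inf_comm (Vn i) P, inf_comm (Vn (i - 1)) P]
    refine finrank_inf_le_of_le hmono_i ?_
    rw [hrank i hi_le_m, hrank (i - 1) (by omega)]
    omega
  have hspan : Vn i ⊓ P = (Vn (i - 1) ⊓ P) ⊔ Submodule.span 𝕜 {u} := by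
    have le1 : (Vn (i - 1) ⊓ P) ⊔ Submodule.span 𝕜 {u} ≤ Vn i ⊓ P :=
      sup_le (inf_le_inf_right P hmono_i)
        ((Submodule.span_singleton_le_iff_mem u _).mpr hu_mem)
    have lt1 : (Vn (i - 1) ⊓ P) < (Vn (i - 1) ⊓ P) ⊔ Submodule.span 𝕜 {u} :=
      lt_of_le_of_ne le_sup_left (by
        intro heq
        exact hu_not (heq ▸ Submodule.mem_sup_right (Submodule.mem_span_singleton_self u)))
    have := Submodule.finrank_lt_finrank_of_lt lt1
    exact (Submodule.eq_of_le_of_finrank_le le1 (by omega)).symm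
  have hu_P : u ∈ P := hu_mem.2
  -- B u does not vanish on P
  obtain ⟨w, hw_P, hw_ne⟩ : ∃ w ∈ P, B u w ≠ 0 := by
    rw [IsOrthoPair] at hi_mem
    push_neg at hi_mem
    obtain ⟨v, hv, w, hw, hvw⟩ := hi_mem
    rw [hspan] at hv
    obtain ⟨x, hx, y, hy, rfl⟩ := Submodule.mem_sup.mp hv
    obtain ⟨c, rfl⟩ := Submodule.mem_span_singleton.mp hy
    rw [apply_add_smul, horth x hx w hw, zero_add] at hvw
    exact ⟨w, hw, fun h => hvw (by rw [h, mul_zero])⟩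
  -- description of pStep as an intersection with one kernel
  have hperp_eq : pStep B Vn P = P ⊓ LinearMap.ker (B u : V →ₗ[𝕜] 𝕜) := by
    apply le_antisymm
    · refine le_inf inf_le_right ?_
      intro z hz
      simp only [LinearMap.mem_ker, ContinuousLinearMap.coe_coe]
      exact hz.1 u hu_mem
    · intro z hz
      refine ⟨?_, hz.1⟩
      intro v hv
      rw [hspan] at hv
      obtain ⟨x, hx, y, hy, rfl⟩ := Submodule.mem_sup.mp hv
      obtain ⟨c, rfl⟩ := Submodule.mem_span_singleton.mp hy
      rw [apply_add_smul, horth x hx z hz.1]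
      have : B u z = 0 := hz.2
      rw [this, mul_zero, add_zero]
  have hw_notin : w ∉ pStep B Vn P := by
    rw [hperp_eq]
    intro hw
    exact hw_ne hw.2
  have hstep_le : pStep B Vn P ≤ P := inf_le_right
  have hrank_step : finrank 𝕜 (pStep B Vn P) + 1 = finrank 𝕜 P := by
    have h1 : finrank 𝕜 P ≤ finrank 𝕜 (pStep B Vn P) + 1 := by
      rw [hperp_eq]
      exact finrank_inf_ker (B u) P
    have h2 : pStep B Vn P < P := lt_of_le_of_ne hstep_le (by
      intro heq
      exact hw_notin (heq.symm ▸ hw_P))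
    have := Submodule.finrank_lt_finrank_of_lt h2
    omega
  -- facts about jIdx
  set j := jIdx B Vn P with hj_def
  have hm_setJ : m ∈ {j : ℕ | ¬ Vn j ⊓ P ≤ pStep B Vn P} := by
    simp only [Set.mem_setOf_eq, htop m le_rfl, top_inf_eq]
    intro hle
    exact hw_notin (hle hw_P)
  have hj_mem : ¬ Vn j ⊓ P ≤ pStep B Vn P := Nat.sInf_mem (⟨m, hm_setJ⟩ : Set.Nonempty _)
  have hj_le_m : j ≤ m := Nat.sInf_le hm_setJ
  have hlt_iff : ∀ j', Vn j' ⊓ P ≤ pStep B Vn P ↔ j' < j := by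
    intro j'
    constructor
    · intro hle
      by_contra h
      push_neg at h
      exact hj_mem (le_trans (inf_le_inf_right P (hmono h)) hle)
    · intro h
      by_contra hle
      have hle2 : jIdx B Vn P ≤ j' := Nat.sInf_le hle
      omega
  have hj_one : 1 ≤ j := by
    rcases Nat.eq_zero_or_pos j with h | h
    · exfalso
      have : Vn 0 ⊓ P ≤ pStep B Vn P := by
        rw [hV0, bot_inf_eq]
        exact bot_le
      rw [hlt_iff 0] at this
      omega
    · exact h
  have hdim_drop : ∀ j', finrank 𝕜 (Vn j' ⊓ pStep B Vn P : Submodule 𝕜 V)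
      + (if j ≤ j' then 1 else 0) = finrank 𝕜 (Vn j' ⊓ P : Submodule 𝕜 V) := by
    intro j'
    by_cases hcase : j ≤ j'
    · simp only [hcase, if_true]
      have hne : ¬ Vn j' ⊓ P ≤ pStep B Vn P := by
        rw [hlt_iff]
        omega
      have hlt2 : Vn j' ⊓ pStep B Vn P < Vn j' ⊓ P := by
        refine lt_of_le_of_ne (inf_le_inf_left _ hstep_le) ?_
        intro heq
        exact hne (heq ▸ inf_le_right)
      have h1 := Submodule.finrank_lt_finrank_of_lt hlt2
      have h2 : finrank 𝕜 (Vn j' ⊓ P : Submodule 𝕜 V)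
          ≤ finrank 𝕜 (Vn j' ⊓ pStep B Vn P : Submodule 𝕜 V) + 1 :=
        finrank_inf_le_of_le hstep_le (by omega)
      omega
    · simp only [hcase, if_false]
      have : Vn j' ⊓ P ≤ pStep B Vn P := by
        rw [hlt_iff]
        omega
      have heq : Vn j' ⊓ pStep B Vn P = Vn j' ⊓ P :=
        le_antisymm (inf_le_inf_left _ hstep_le) (le_inf inf_le_left this)
      rw [add_zero, heq]
  -- the null space grows by exactly one
  have hu_step : u ∈ pStep B Vn P := by
    rw [hperp_eq]
    exact ⟨hu_P, by simpa using skew_apply_self hB u⟩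
  have hu_null' : u ∈ nullIn B (pStep B Vn P) := by
    refine ⟨?_, hu_step⟩
    intro x hx
    rw [hperp_eq] at hx
    exact skew_eq_zero_symm hB hx.2
  have hN_le : nullIn B P ≤ nullIn B (pStep B Vn P) := by
    intro v hv
    have hv_step : v ∈ pStep B Vn P := by
      rw [hperp_eq]
      exact ⟨hv.2, by simpa using hv.1 u hu_P⟩
    exact ⟨fun x hx => hv.1 x (hstep_le hx), hv_step⟩
  have hu_notN : u ∉ nullIn B P := by
    intro hu
    exact hw_ne (skew_eq_zero_symm hB (hu.1 w hw_P))
  have hu_ne : u ≠ 0 := by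
    intro h
    apply hw_ne
    rw [h]
    simp
  have hPspan : P = pStep B Vn P ⊔ Submodule.span 𝕜 {w} := by
    have le1 : pStep B Vn P ⊔ Submodule.span 𝕜 {w} ≤ P :=
      sup_le hstep_le ((Submodule.span_singleton_le_iff_mem w _).mpr hw_P)
    have lt1 : pStep B Vn P < pStep B Vn P ⊔ Submodule.span 𝕜 {w} :=
      lt_of_le_of_ne le_sup_left (by
        intro heq
        exact hw_notin (heq ▸ Submodule.mem_sup_right (Submodule.mem_span_singleton_self w)))
    have := Submodule.finrank_lt_finrank_of_lt lt1
    exact (Submodule.eq_of_le_of_finrank_le le1 (by omega)).symm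
  have hN'_le : nullIn B (pStep B Vn P) ≤ nullIn B P ⊔ Submodule.span 𝕜 {u} := by
    intro v hv
    set c : 𝕜 := B v w / B u w with hc_def
    have hv' : v - c • u ∈ nullIn B P := by
      constructor
      · intro x hx
        rw [hPspan] at hx
        obtain ⟨y, hy, z, hz, rfl⟩ := Submodule.mem_sup.mp hx
        obtain ⟨t, rfl⟩ := Submodule.mem_span_singleton.mp hz
        have hyv : B y v = 0 := hv.1 y hy
        have hyu : B y u = 0 := by
          rw [hperp_eq] at hy
          exact skew_eq_zero_symm hB hy.2
        have hwv' : B w (v - c • u) = 0 := by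
          rw [apply_sub_smul v u w c, hB w v, hB w u, hc_def]
          field_simp
          ring
        rw [apply_add_smul y w (v - c • u) t, hwv', mul_zero, add_zero,
          apply_sub_smul v u y c, hyv, hyu, mul_zero, sub_zero]
      · exact Submodule.sub_mem _ (hstep_le hv.2) (Submodule.smul_mem _ c hu_P)
    have hvdec : v = (v - c • u) + c • u := by abel
    rw [hvdec]
    exact Submodule.add_mem _ (Submodule.mem_sup_left hv') (Submodule.mem_sup_right
      (Submodule.smul_mem _ c (Submodule.mem_span_singleton_self u)))
  have hN_lt : nullIn B P < nullIn B (pStep B Vn P) := by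
    refine lt_of_le_of_ne hN_le ?_
    intro heq
    exact hu_notN (heq ▸ hu_null')
  have hnul : finrank 𝕜 (nullIn B (pStep B Vn P)) = finrank 𝕜 (nullIn B P) + 1 := by
    have h1 := Submodule.finrank_lt_finrank_of_lt hN_lt
    have h2 : finrank 𝕜 (nullIn B (pStep B Vn P))
        ≤ finrank 𝕜 (nullIn B P ⊔ Submodule.span 𝕜 {u} : Submodule 𝕜 V) :=
      Submodule.finrank_mono hN'_le
    have h3 := Submodule.finrank_sup_add_finrank_inf_eq (nullIn B P) (Submodule.span 𝕜 {u})
    have h4 : finrank 𝕜 (Submodule.span 𝕜 {u} : Submodule 𝕜 V) = 1 :=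
      finrank_span_singleton hu_ne
    omega
  exact ⟨hstep_le, hrank_step, hlt_iff, hj_one, hj_le_m, hdim_drop, hnul, hlt⟩

lemma apply_smul_add' (x y z : V) (s t : 𝕜) :
    B x (s • y + t • z) = s * B x y + t * B x z := by
  simp [map_add, map_smul, smul_eq_mul]

lemma apply_sub_sub (q v u w : V) (a b : 𝕜) :
    B q (v - a • u - b • w) = B q v - a * B q u - b * B q w := by
  simp [map_sub, map_smul, smul_eq_mul]

lemma add_smul_add_apply (y u w z : V) (s t : 𝕜) :
    B (y + (s • u + t • w)) z = B y z + s * B u z + t * B w z := by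
  simp [map_add, map_smul, smul_eq_mul, add_assoc]

/-- A skew-symmetric form has even rank on every subspace. -/
lemma exists_even_rank (hB : IsSkew B) :
    ∀ n (W : Submodule 𝕜 V), finrank 𝕜 W ≤ n →
      ∃ r, finrank 𝕜 W = finrank 𝕜 (nullIn B W) + 2 * r := by
  intro n
  induction n with
  | zero =>
    intro W hW
    refine ⟨0, ?_⟩
    have h1 : finrank 𝕜 (nullIn B W) ≤ finrank 𝕜 W :=
      Submodule.finrank_mono inf_le_right
    omega
  | succ n ih =>
    intro W hW
    by_cases hiso : IsIsotropic B W
    · refine ⟨0, ?_⟩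
      have hNW : nullIn B W = W := by
        apply le_antisymm inf_le_right
        exact le_inf (fun w hw v hv => hiso v hv w hw) le_rfl
      rw [hNW]
      omega
    · rw [IsIsotropic, IsOrthoPair] at hiso
      push_neg at hiso
      obtain ⟨u, hu, w, hw, huw⟩ := hiso
      set W' : Submodule 𝕜 V := W ⊓ LinearMap.ker (B u : V →ₗ[𝕜] 𝕜) ⊓ LinearMap.ker (B w : V →ₗ[𝕜] 𝕜) with hW'
      have hW'_le : W' ≤ W := le_trans inf_le_left inf_le_left
      have hW'_keru : W' ≤ LinearMap.ker (B u : V →ₗ[𝕜] 𝕜) := le_trans inf_le_left inf_le_right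
      have hW'_kerw : W' ≤ LinearMap.ker (B w : V →ₗ[𝕜] 𝕜) := inf_le_right
      have hBuu : B u u = 0 := skew_apply_self hB u
      have hBww : B w w = 0 := skew_apply_self hB w
      have hBwu : B w u = - B u w := by rw [hB w u]
      have hu0 : u ≠ 0 := fun h => huw (by rw [h]; simp)
      have hw0 : w ≠ 0 := fun h => huw (by rw [h]; simp)
      set U : Submodule 𝕜 V := Submodule.span 𝕜 {u} ⊔ Submodule.span 𝕜 {w} with hU
      -- any element of U is s • u + t • w
      have hU_elt : ∀ x ∈ U, ∃ s t : 𝕜, x = s • u + t • w := by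
        intro x hx
        obtain ⟨a, ha, b, hb, rfl⟩ := Submodule.mem_sup.mp hx
        obtain ⟨s, rfl⟩ := Submodule.mem_span_singleton.mp ha
        obtain ⟨t, rfl⟩ := Submodule.mem_span_singleton.mp hb
        exact ⟨s, t, rfl⟩
      have hWU_bot : W' ⊓ U = ⊥ := by
        rw [Submodule.eq_bot_iff]
        rintro x ⟨hxW', hxU⟩
        obtain ⟨s, t, rfl⟩ := hU_elt _ hxU
        have h1 : B u (s • u + t • w) = 0 := hW'_keru hxW'
        have h2 : B w (s • u + t • w) = 0 := hW'_kerw hxW'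
        rw [apply_smul_add' u u w s t, hBuu, mul_zero, zero_add] at h1
        rw [apply_smul_add' w u w s t, hBww, mul_zero, add_zero, hBwu] at h2
        have ht : t = 0 := by
          rcases mul_eq_zero.mp h1 with h | h
          · exact h
          · exact absurd h huw
        have hs : s = 0 := by
          rcases mul_eq_zero.mp h2 with h | h
          · exact h
          · exact absurd (neg_eq_zero.mp h) huw
        rw [hs, ht]
        simp
      have hU_le : U ≤ W := sup_le ((Submodule.span_singleton_le_iff_mem u _).mpr hu)
        ((Submodule.span_singleton_le_iff_mem w _).mpr hw)
      have hU_rank : finrank 𝕜 U = 2 := by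
        have h0 : Submodule.span 𝕜 {u} ⊓ Submodule.span 𝕜 {w} = ⊥ := by
          rw [Submodule.eq_bot_iff]
          rintro x ⟨hx1, hx2⟩
          obtain ⟨s, rfl⟩ := Submodule.mem_span_singleton.mp hx1
          obtain ⟨t, hts⟩ := Submodule.mem_span_singleton.mp hx2
          by_cases hs : s = 0
          · rw [hs]; simp
          · exfalso
            apply huw
            have : B (s • u) w = 0 := by rw [← hts, hB (t • w) w]; simp [map_smul, hBww]
            have h3 : s * B u w = 0 := by
              rw [← this]; simp [map_smul, smul_eq_mul]
            rcases mul_eq_zero.mp h3 with h | h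
            · exact absurd h hs
            · exact h
        have := Submodule.finrank_sup_add_finrank_inf_eq
          (Submodule.span 𝕜 {u}) (Submodule.span 𝕜 {w})
        rw [h0, finrank_span_singleton hu0, finrank_span_singleton hw0] at this
        simpa [hU] using this
      -- decomposition of elements of W
      have hdec : ∀ v ∈ W, v - (-(B w v) / B u w) • u - (B u v / B u w) • w ∈ W' := by
        intro v hv
        refine ⟨⟨?_, ?_⟩, ?_⟩
        · exact Submodule.sub_mem _ (Submodule.sub_mem _ hv (Submodule.smul_mem _ _ hu))
            (Submodule.smul_mem _ _ hw)
        · refine LinearMap.mem_ker.mpr ?_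
          show B u (v - (-(B w v) / B u w) • u - (B u v / B u w) • w) = 0
          rw [apply_sub_sub u v u w _ _, hBuu, mul_zero, sub_zero]
          field_simp
          ring
        · refine LinearMap.mem_ker.mpr ?_
          show B w (v - (-(B w v) / B u w) • u - (B u v / B u w) • w) = 0
          rw [apply_sub_sub w v u w _ _, hBww, mul_zero, sub_zero, hBwu]
          field_simp
          ring
      have hWdec : W = W' ⊔ U := by
        apply le_antisymm
        · intro v hv
          set a : 𝕜 := -(B w v) / B u w
          set b : 𝕜 := B u v / B u w
          have hv' := hdec v hv
          have : v = (v - a • u - b • w) + (a • u + b • w) := by abel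
          rw [this]
          refine Submodule.add_mem _ (Submodule.mem_sup_left hv') (Submodule.mem_sup_right ?_)
          exact Submodule.add_mem _
            (Submodule.mem_sup_left (Submodule.smul_mem _ a (Submodule.mem_span_singleton_self u)))
            (Submodule.mem_sup_right (Submodule.smul_mem _ b (Submodule.mem_span_singleton_self w)))
        · exact sup_le hW'_le hU_le
      have hrankW : finrank 𝕜 W = finrank 𝕜 W' + 2 := by
        have := Submodule.finrank_sup_add_finrank_inf_eq W' U
        rw [hWU_bot, hU_rank, ← hWdec] at this
        simpa using this
      -- null spaces agree
      have hNle : nullIn B W ≤ nullIn B W' := by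
        rintro v ⟨hv1, hv2⟩
        refine ⟨fun x hx => hv1 x (hW'_le hx), ⟨⟨hv2, ?_⟩, ?_⟩⟩
        · exact LinearMap.mem_ker.mpr (hv1 u hu)
        · exact LinearMap.mem_ker.mpr (hv1 w hw)
      have hN'le : nullIn B W' ≤ nullIn B W ⊔ U := by
        rintro v ⟨hv1, hv2⟩
        set a : 𝕜 := -(B w v) / B u w with ha
        set b : 𝕜 := B u v / B u w with hb
        have hv'W : v - a • u - b • w ∈ W' := by
          have h1 : B u v = 0 := hW'_keru hv2
          have h2 : B w v = 0 := hW'_kerw hv2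
          have ha0 : a = 0 := by rw [ha, h2]; simp
          have hb0 : b = 0 := by rw [hb, h1]; simp
          rw [ha0, hb0]
          simpa using hv2
        have hv'N : v - a • u - b • w ∈ nullIn B W := by
          refine ⟨?_, hW'_le hv'W⟩
          intro x hx
          rw [hWdec] at hx
          obtain ⟨y, hy, q, hq, rfl⟩ := Submodule.mem_sup.mp hx
          obtain ⟨s, t, rfl⟩ := hU_elt _ hq
          rw [add_smul_add_apply y u w _ s t]
          have hyv : B y v = 0 := hv1 y hy
          have hyu : B y u = 0 := skew_eq_zero_symm hB (hW'_keru hy)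
          have hyw : B y w = 0 := skew_eq_zero_symm hB (hW'_kerw hy)
          have huv' : B u (v - a • u - b • w) = 0 := by
            rw [apply_sub_sub u v u w a b, hBuu, mul_zero, sub_zero, hb]
            field_simp
            ring
          have hwv' : B w (v - a • u - b • w) = 0 := by
            rw [apply_sub_sub w v u w a b, hBww, mul_zero, sub_zero, hBwu, ha]
            field_simp
            ring
          rw [apply_sub_sub y v u w a b, hyv, hyu, hyw, huv', hwv']
          ring
        have : v = (v - a • u - b • w) + (a • u + b • w) := by abel
        rw [this]
        refine Submodule.add_mem _ (Submodule.mem_sup_left hv'N) (Submodule.mem_sup_right ?_)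
        exact Submodule.add_mem _
          (Submodule.mem_sup_left (Submodule.smul_mem _ a (Submodule.mem_span_singleton_self u)))
          (Submodule.mem_sup_right (Submodule.smul_mem _ b (Submodule.mem_span_singleton_self w)))
      have hN'U_bot : nullIn B W' ⊓ U = ⊥ := by
        rw [Submodule.eq_bot_iff]
        rintro x ⟨hx1, hx2⟩
        have : x ∈ W' ⊓ U := ⟨hx1.2, hx2⟩
        rw [hWU_bot] at this
        exact this
      have hNrank : finrank 𝕜 (nullIn B W') = finrank 𝕜 (nullIn B W) := by
        have h1 := Submodule.finrank_sup_add_finrank_inf_eq (nullIn B W') U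
        rw [hN'U_bot] at h1
        have h2 : finrank 𝕜 (nullIn B W' ⊔ U : Submodule 𝕜 V)
            ≤ finrank 𝕜 (nullIn B W ⊔ U : Submodule 𝕜 V) :=
          Submodule.finrank_mono (sup_le (le_trans hN'le le_rfl) le_sup_right)
        have h3 := Submodule.finrank_sup_add_finrank_inf_eq (nullIn B W) U
        have h4 := Submodule.finrank_mono hNle
        have h5 : finrank 𝕜 (⊥ : Submodule 𝕜 V) = 0 := finrank_bot 𝕜 V
        rw [hU_rank] at h1 h3
        omega
      obtain ⟨r, hr⟩ := ih W' (by omega)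
      exact ⟨r + 1, by omega⟩

lemma finset_sum_le {ι : Type} {s : Finset ι} {f : ι → Submodule 𝕜 V} {T : Submodule 𝕜 V}
    (h : ∀ j ∈ s, f j ≤ T) : (∑ j ∈ s, f j) ≤ T :=
  Finset.sum_induction f (· ≤ T)
    (fun a b ha hb => by rw [Submodule.add_eq_sup]; exact sup_le ha hb)
    (by rw [Submodule.zero_eq_bot]; exact bot_le) h

lemma exists_span_sup {S T : Submodule 𝕜 V} (hle : S ≤ T)
    (hdim : finrank 𝕜 T ≤ finrank 𝕜 S + 1) (hne : ¬ T ≤ S) :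
    ∃ e ∈ T, T = S ⊔ Submodule.span 𝕜 {e} := by
  obtain ⟨e, heT, heS⟩ := SetLike.not_le_iff_exists.mp hne
  refine ⟨e, heT, ?_⟩
  have le1 : S ⊔ Submodule.span 𝕜 {e} ≤ T :=
    sup_le hle ((Submodule.span_singleton_le_iff_mem e T).mpr heT)
  have lt1 : S < S ⊔ Submodule.span 𝕜 {e} := lt_of_le_of_ne le_sup_left
    (fun h => heS (h ▸ Submodule.mem_sup_right (Submodule.mem_span_singleton_self e)))
  have := Submodule.finrank_lt_finrank_of_lt lt1
  exact ((Submodule.eq_of_le_of_finrank_le le1 (by omega))).symm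

lemma nullIn_inf_le {S T : Submodule 𝕜 V} (hST : S ≤ T) :
    nullIn B T ⊓ S ≤ nullIn B S := by
  rintro v ⟨⟨hv1, _⟩, hv3⟩
  exact ⟨fun x hx => hv1 x (hST hx), hv3⟩

lemma null_step (m : ℕ) (hmono : Monotone Vn)
    (hrank : ∀ j ≤ m, finrank 𝕜 (Vn j) = j) (hB : IsSkew B)
    {j : ℕ} (hj1 : 1 ≤ j) (hjm : j ≤ m) :
    finrank 𝕜 (nullIn B (Vn j)) = finrank 𝕜 (nullIn B (Vn (j - 1))) + 1 ∨
    finrank 𝕜 (nullIn B (Vn (j - 1))) = finrank 𝕜 (nullIn B (Vn j)) + 1 := by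
  have hmVn : Vn (j - 1) ≤ Vn j := hmono (by omega)
  have hrj : finrank 𝕜 (Vn j) = j := hrank j hjm
  have hrj1 : finrank 𝕜 (Vn (j - 1)) = j - 1 := hrank (j - 1) (by omega)
  have hinf_le : nullIn B (Vn j) ⊓ Vn (j - 1) ≤ nullIn B (Vn (j - 1)) :=
    nullIn_inf_le hmVn
  have ha1 : finrank 𝕜 (nullIn B (Vn j) ⊓ Vn j : Submodule 𝕜 V)
      ≤ finrank 𝕜 (nullIn B (Vn j) ⊓ Vn (j - 1) : Submodule 𝕜 V) + 1 :=
    finrank_inf_le_of_le hmVn (by omega)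
  have ha2 : nullIn B (Vn j) ⊓ Vn j = nullIn B (Vn j) := inf_eq_left.mpr inf_le_right
  have ha3 := Submodule.finrank_mono hinf_le
  rw [ha2] at ha1
  have hnotle : ¬ Vn j ≤ Vn (j - 1) := by
    intro h
    have := Submodule.finrank_mono h
    omega
  obtain ⟨e, he, hspan⟩ := exists_span_sup hmVn (by omega) hnotle
  have hK : nullIn B (Vn (j - 1)) ⊓ LinearMap.ker (B e : V →ₗ[𝕜] 𝕜) ≤ nullIn B (Vn j) := by
    rintro v ⟨⟨hv1, hv2⟩, hv3⟩
    refine ⟨?_, hmVn hv2⟩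
    intro x hx
    rw [hspan] at hx
    obtain ⟨y, hy, z, hz, rfl⟩ := Submodule.mem_sup.mp hx
    obtain ⟨c, rfl⟩ := Submodule.mem_span_singleton.mp hz
    rw [apply_add_smul y e v c, hv1 y hy, zero_add,
      (by exact LinearMap.mem_ker.mp hv3 : B e v = 0), mul_zero]
  have hb1 := finrank_inf_ker (B e) (nullIn B (Vn (j - 1)))
  have hb2 := Submodule.finrank_mono hK
  obtain ⟨r1, hr1⟩ := exists_even_rank hB (finrank 𝕜 (Vn j)) (Vn j) le_rfl
  obtain ⟨r2, hr2⟩ := exists_even_rank hB (finrank 𝕜 (Vn (j - 1))) (Vn (j - 1)) le_rfl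
  omega

lemma sum_null_lower (m : ℕ) (hV0 : Vn 0 = ⊥) (hmono : Monotone Vn)
    (hrank : ∀ j ≤ m, finrank 𝕜 (Vn j) = j) (hB : IsSkew B) :
    ∀ j ≤ m, j + finrank 𝕜 (nullIn B (Vn j)) ≤
      2 * finrank 𝕜 (∑ l ∈ Finset.Icc 1 j, nullIn B (Vn l) : Submodule 𝕜 V) := by
  intro j
  induction j with
  | zero =>
    intro _
    have h0 : nullIn B (Vn 0) = ⊥ := by
      rw [hV0, nullIn]
      exact inf_bot_eq _
    rw [h0]
    simp
  | succ j ih =>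
    intro hjm
    have ihj := ih (by omega)
    have hsum : (∑ l ∈ Finset.Icc 1 (j + 1), nullIn B (Vn l))
        = (∑ l ∈ Finset.Icc 1 j, nullIn B (Vn l)) ⊔ nullIn B (Vn (j + 1)) := by
      rw [Finset.sum_Icc_succ_top (by omega), Submodule.add_eq_sup]
    have hstep := null_step m hmono hrank hB (j := j + 1) (by omega) hjm
    rw [show j + 1 - 1 = j from rfl] at hstep
    have hmono_sum : finrank 𝕜 (∑ l ∈ Finset.Icc 1 j, nullIn B (Vn l) : Submodule 𝕜 V)
        ≤ finrank 𝕜 (∑ l ∈ Finset.Icc 1 (j + 1), nullIn B (Vn l) : Submodule 𝕜 V) := by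
      apply Submodule.finrank_mono
      rw [hsum]
      exact le_sup_left
    rcases hstep with hup | hdown
    · have hnot : ¬ nullIn B (Vn (j + 1)) ≤ Vn j := by
        intro hle
        have h1 : nullIn B (Vn (j + 1)) ≤ nullIn B (Vn j) := by
          have := nullIn_inf_le (B := B) (hmono (by omega : j ≤ j + 1))
          exact fun v hv => this ⟨hv, hle hv⟩
        have := Submodule.finrank_mono h1
        omega
      obtain ⟨x, hx1, hx2⟩ := SetLike.not_le_iff_exists.mp hnot
      have hM_le : (∑ l ∈ Finset.Icc 1 j, nullIn B (Vn l)) ≤ Vn j :=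
        finset_sum_le (fun l hl => le_trans inf_le_right
          (hmono (Finset.mem_Icc.mp hl).2))
      have hxM : x ∈ (∑ l ∈ Finset.Icc 1 (j + 1), nullIn B (Vn l) : Submodule 𝕜 V) := by
        rw [hsum]
        exact Submodule.mem_sup_right hx1
      have hlt : (∑ l ∈ Finset.Icc 1 j, nullIn B (Vn l) : Submodule 𝕜 V)
          < (∑ l ∈ Finset.Icc 1 (j + 1), nullIn B (Vn l) : Submodule 𝕜 V) := by
        refine lt_of_le_of_ne ?_ ?_
        · rw [hsum]
          exact le_sup_left
        · intro heq
          exact hx2 (hM_le (heq ▸ hxM))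
      have := Submodule.finrank_lt_finrank_of_lt hlt
      omega
    · omega

lemma pSeq_const_of_iso (hV0 : Vn 0 = ⊥) {k l : ℕ}
    (h : IsIsotropic B (pSeq B Vn k)) (hkl : k ≤ l) :
    pSeq B Vn l = pSeq B Vn k := by
  induction l with
  | zero =>
    have : k = 0 := by omega
    subst this
    rfl
  | succ l ih =>
    rcases Nat.lt_or_ge k (l + 1) with h1 | h2
    · have heq := ih (by omega)
      show pStep B Vn (pSeq B Vn l) = _
      rw [heq, pStep_of_isotropic hV0 h]
    · have : k = l + 1 := by omega
      subst this
      rfl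

lemma nullIn_le_pSeq (m : ℕ) (hV0 : Vn 0 = ⊥) (hmono : Monotone Vn)
    (hrank : ∀ j ≤ m, finrank 𝕜 (Vn j) = j) (htop : ∀ j, m ≤ j → Vn j = ⊤)
    (hB : IsSkew B) :
    ∀ k, ∀ j, nullIn B (Vn j) ≤ pSeq B Vn k := by
  intro k
  induction k with
  | zero =>
    intro j
    exact le_top
  | succ k ih =>
    intro j
    by_cases hiso : IsIsotropic B (pSeq B Vn k)
    · show _ ≤ pStep B Vn (pSeq B Vn k)
      rw [pStep_of_isotropic hV0 hiso]
      exact ih j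
    · have SF := stepFacts m hV0 hmono hrank htop hB hiso
      intro v hv
      have hvP : v ∈ pSeq B Vn k := ih j hv
      show v ∈ pStep B Vn (pSeq B Vn k)
      refine ⟨?_, hvP⟩
      rintro x ⟨hx1, hx2⟩
      by_cases hij : iIdx B Vn (pSeq B Vn k) ≤ j
      · exact hv.1 x (hmono hij hx1)
      · have ho := SF.ortho_lt j (by omega) v ⟨hv.2, hvP⟩ x hx2
        exact skew_eq_zero_symm hB ho

lemma pSeq_facts (m : ℕ) (hm : finrank 𝕜 V = m) (hV0 : Vn 0 = ⊥) (hmono : Monotone Vn)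
    (hrank : ∀ j ≤ m, finrank 𝕜 (Vn j) = j) (htop : ∀ j, m ≤ j → Vn j = ⊤)
    (hB : IsSkew B) (d : ℕ) (hd2 : ¬ IsIsotropic B (pSeq B Vn (d - 1))) :
    ∀ k ≤ d, finrank 𝕜 (pSeq B Vn k) + k = m ∧
      finrank 𝕜 (nullIn B (pSeq B Vn k))
        = finrank 𝕜 (nullIn B (⊤ : Submodule 𝕜 V)) + k ∧
      ∀ j', finrank 𝕜 (Vn j' ⊓ pSeq B Vn k : Submodule 𝕜 V)
        + ((Finset.Icc 1 k).filter
            (fun l => jIdx B Vn (pSeq B Vn (l - 1)) ≤ j')).card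
        = finrank 𝕜 (Vn j') := by
  have hnotiso : ∀ k < d, ¬ IsIsotropic B (pSeq B Vn k) := by
    intro k hk hiso
    have h1 : pSeq B Vn (d - 1) = pSeq B Vn k :=
      pSeq_const_of_iso hV0 hiso (by omega)
    exact hd2 (h1 ▸ hiso)
  intro k
  induction k with
  | zero =>
    intro _
    have h0 : pSeq B Vn 0 = (⊤ : Submodule 𝕜 V) := rfl
    refine ⟨?_, ?_, ?_⟩
    · rw [h0, add_zero, finrank_top, hm]
    · rw [h0, add_zero]
    · intro j'
      rw [h0, inf_top_eq]
      have : Finset.Icc 1 0 = (∅ : Finset ℕ) := Finset.Icc_eq_empty (by omega)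
      rw [this, Finset.filter_empty, Finset.card_empty, add_zero]
  | succ k ih =>
    intro hk
    obtain ⟨ihA, ihB, ihC⟩ := ih (by omega)
    have SF := stepFacts m hV0 hmono hrank htop hB (hnotiso k (by omega))
    have hps : pSeq B Vn (k + 1) = pStep B Vn (pSeq B Vn k) := rfl
    refine ⟨?_, ?_, ?_⟩
    · rw [hps]
      have := SF.rank
      omega
    · rw [hps, SF.nul]
      omega
    · intro j'
      have hdrop := SF.dim_drop j'
      have hCk := ihC j'
      have hicc : Finset.Icc 1 (k + 1) = insert (k + 1) (Finset.Icc 1 k) :=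
        (Finset.insert_Icc_right_eq_Icc_add_one (by omega)).symm
      have hcard : ((Finset.Icc 1 (k + 1)).filter
            (fun l => jIdx B Vn (pSeq B Vn (l - 1)) ≤ j')).card
          = ((Finset.Icc 1 k).filter
            (fun l => jIdx B Vn (pSeq B Vn (l - 1)) ≤ j')).card
            + (if jIdx B Vn (pSeq B Vn k) ≤ j' then 1 else 0) := by
        rw [hicc, Finset.filter_insert]
        simp only [Nat.add_sub_cancel]
        by_cases hc : jIdx B Vn (pSeq B Vn k) ≤ j'
        · rw [if_pos hc, if_pos hc, Finset.card_insert_of_notMem]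
          intro hmem
          have := Finset.mem_Icc.mp (Finset.mem_of_mem_filter _ hmem)
          omega
        · rw [if_neg hc, if_neg hc, add_zero]
      rw [hps, hcard]
      omega

end Statement17

/-- With `d` the stopping index of the inductive construction (`p^{d-1}(B)`
not `B`-isotropic, `p^d(B)` `B`-isotropic) and `j_k := jIdx B Vn (p^{k-1}(B))`, the
mapping `{1, …, d} → jump p(B)`, `k ↦ j_k`, is a well-defined bijection. -/
theorem jIdx_bijOn_jump_lagSum
    (m : ℕ) (hm : finrank 𝕜 V = m)
    (Vn : ℕ → Submodule 𝕜 V) (hV0 : Vn 0 = ⊥) (hmono : Monotone Vn)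
    (hrank : ∀ j ≤ m, finrank 𝕜 (Vn j) = j) (htop : ∀ j, m ≤ j → Vn j = ⊤)
    (B : V →L[𝕜] V →L[𝕜] 𝕜) (hB : IsSkew B) (hB0 : B ≠ 0)
    (d : ℕ) (hd1 : 1 ≤ d) (hdm : d ≤ m)
    (hd2 : ¬ IsIsotropic B (pSeq B Vn (d - 1)))
    (hd3 : IsIsotropic B (pSeq B Vn d)) :
    Set.BijOn (fun k => jIdx B Vn (pSeq B Vn (k - 1))) (Set.Icc 1 d)
      (jumpSetN m Vn (lagSumN m Vn B)) := by
  classical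
  open Statement17 in
  have hnotiso : ∀ k < d, ¬ IsIsotropic B (pSeq B Vn k) := by
    intro k hk hiso
    have h1 : pSeq B Vn (d - 1) = pSeq B Vn k :=
      pSeq_const_of_iso hV0 hiso (by omega)
    exact hd2 (h1 ▸ hiso)
  open Statement17 in
  have hPF := pSeq_facts m hm hV0 hmono hrank htop hB d hd2 d le_rfl
  obtain ⟨hA, hBn, hC⟩ := hPF
  have hNd : nullIn B (pSeq B Vn d) = pSeq B Vn d :=
    le_antisymm inf_le_right (le_inf (fun w hw v hv => hd3 v hv w hw) le_rfl)
  rw [hNd] at hBn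
  have hn0 : finrank 𝕜 (nullIn B (⊤ : Submodule 𝕜 V)) + 2 * d = m := by omega
  open Statement17 in
  have hlag_le : lagSumN m Vn B ≤ pSeq B Vn d :=
    finset_sum_le (fun j _ => nullIn_le_pSeq m hV0 hmono hrank htop hB d j)
  open Statement17 in
  have hlow := sum_null_lower m hV0 hmono hrank hB m le_rfl
  have hVm : Vn m = ⊤ := htop m le_rfl
  rw [hVm] at hlow
  have hls : (∑ l ∈ Finset.Icc 1 m, nullIn B (Vn l)) = lagSumN m Vn B := rfl
  rw [hls] at hlow
  have hlag_eq : lagSumN m Vn B = pSeq B Vn d :=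
    Submodule.eq_of_le_of_finrank_le hlag_le (by omega)
  rw [hlag_eq]
  -- dimension functions along the flag
  open Statement17 in
  have hg_mono : ∀ j, 1 ≤ j →
      finrank 𝕜 (Vn (j - 1) ⊓ pSeq B Vn d : Submodule 𝕜 V)
        ≤ finrank 𝕜 (Vn j ⊓ pSeq B Vn d : Submodule 𝕜 V) := by
    intro j _
    exact Submodule.finrank_mono (inf_le_inf_right _ (hmono (by omega)))
  open Statement17 in
  have hg_step : ∀ j, 1 ≤ j → j ≤ m →
      finrank 𝕜 (Vn j ⊓ pSeq B Vn d : Submodule 𝕜 V)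
        ≤ finrank 𝕜 (Vn (j - 1) ⊓ pSeq B Vn d : Submodule 𝕜 V) + 1 := by
    intro j h1 h2
    have h3 := finrank_inf_le_of_le (A := pSeq B Vn d)
      (hmono (show j - 1 ≤ j by omega))
      (by rw [hrank j h2, hrank (j - 1) (by omega)]; omega)
    rw [inf_comm (pSeq B Vn d) (Vn j), inf_comm (pSeq B Vn d) (Vn (j - 1))] at h3
    exact h3
  open Statement17 in
  have hJ_bounds : ∀ k, 1 ≤ k → k ≤ d →
      1 ≤ jIdx B Vn (pSeq B Vn (k - 1)) ∧ jIdx B Vn (pSeq B Vn (k - 1)) ≤ m := by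
    intro k h1 h2
    have SF := stepFacts m hV0 hmono hrank htop hB (hnotiso (k - 1) (by omega))
    exact ⟨SF.one_le, SF.le_m⟩
  have hsplit : ∀ j, 1 ≤ j →
      ((Finset.Icc 1 d).filter (fun l => jIdx B Vn (pSeq B Vn (l - 1)) ≤ j)).card
      = ((Finset.Icc 1 d).filter (fun l => jIdx B Vn (pSeq B Vn (l - 1)) ≤ j - 1)).card
        + ((Finset.Icc 1 d).filter (fun l => jIdx B Vn (pSeq B Vn (l - 1)) = j)).card := by
    intro j hj
    rw [← Finset.card_union_of_disjoint (by
      rw [Finset.disjoint_left]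
      intro l hl1 hl2
      have h1 := (Finset.mem_filter.mp hl1).2
      have h2 := (Finset.mem_filter.mp hl2).2
      omega)]
    congr 1
    ext l
    simp only [Finset.mem_union, Finset.mem_filter]
    constructor
    · rintro ⟨hl, hle⟩
      rcases Nat.lt_or_ge (jIdx B Vn (pSeq B Vn (l - 1))) j with h | h
      · exact Or.inl ⟨hl, by omega⟩
      · exact Or.inr ⟨hl, by omega⟩
    · rintro (⟨hl, hle⟩ | ⟨hl, heq⟩)
      · exact ⟨hl, by omega⟩
      · exact ⟨hl, by omega⟩
  have he_le : ∀ j, 1 ≤ j → j ≤ m →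
      ((Finset.Icc 1 d).filter (fun l => jIdx B Vn (pSeq B Vn (l - 1)) = j)).card ≤ 1 := by
    intro j h1 h2
    have hc1 := hC j
    have hc0 := hC (j - 1)
    have hsp := hsplit j h1
    have hm1 := hg_mono j h1
    have hm2 := hg_step j h1 h2
    have hrj := hrank j h2
    have hrj1 := hrank (j - 1) (by omega)
    omega
  have hjump_iff : ∀ j, 1 ≤ j → j ≤ m →
      ((¬ Vn j ≤ Vn (j - 1) ⊔ pSeq B Vn d) ↔
        finrank 𝕜 (Vn j ⊓ pSeq B Vn d : Submodule 𝕜 V)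
          = finrank 𝕜 (Vn (j - 1) ⊓ pSeq B Vn d : Submodule 𝕜 V)) := by
    intro j h1 h2
    have hsup_le : Vn (j - 1) ⊔ pSeq B Vn d ≤ Vn j ⊔ pSeq B Vn d :=
      sup_le_sup_right (hmono (by omega)) _
    have e1 := Submodule.finrank_sup_add_finrank_inf_eq (Vn j) (pSeq B Vn d)
    have e2 := Submodule.finrank_sup_add_finrank_inf_eq (Vn (j - 1)) (pSeq B Vn d)
    have hrj := hrank j h2
    have hrj1 := hrank (j - 1) (by omega)
    have hgm := hg_mono j h1
    have hgs := hg_step j h1 h2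
    constructor
    · intro hnle
      by_contra hne
      have hfr : finrank 𝕜 (Vn (j - 1) ⊔ pSeq B Vn d : Submodule 𝕜 V)
          ≥ finrank 𝕜 (Vn j ⊔ pSeq B Vn d : Submodule 𝕜 V) := by omega
      have heq := Submodule.eq_of_le_of_finrank_le hsup_le hfr
      apply hnle
      rw [heq]
      exact le_sup_left
    · intro hgeq hle
      have hsup_eq : Vn j ⊔ pSeq B Vn d = Vn (j - 1) ⊔ pSeq B Vn d :=
        le_antisymm (sup_le hle le_sup_right) hsup_le
      have hfr : finrank 𝕜 (Vn j ⊔ pSeq B Vn d : Submodule 𝕜 V)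
          = finrank 𝕜 (Vn (j - 1) ⊔ pSeq B Vn d : Submodule 𝕜 V) := by rw [hsup_eq]
      omega
  have hjump_iff_e : ∀ j, 1 ≤ j → j ≤ m →
      (j ∈ jumpSetN m Vn (pSeq B Vn d) ↔
        ((Finset.Icc 1 d).filter (fun l => jIdx B Vn (pSeq B Vn (l - 1)) = j)).card = 1) := by
    intro j h1 h2
    have hc1 := hC j
    have hc0 := hC (j - 1)
    have hsp := hsplit j h1
    have hrj := hrank j h2
    have hrj1 := hrank (j - 1) (by omega)
    have hel := he_le j h1 h2
    have hgm := hg_mono j h1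
    have hgs := hg_step j h1 h2
    constructor
    · rintro ⟨_, _, hnle⟩
      have hg := (hjump_iff j h1 h2).mp hnle
      omega
    · intro he
      exact ⟨h1, h2, (hjump_iff j h1 h2).mpr (by omega)⟩
  refine ⟨?_, ?_, ?_⟩
  · -- MapsTo
    intro k hk
    simp only [Set.mem_Icc] at hk
    have hb := hJ_bounds k hk.1 hk.2
    have hkmem : k ∈ (Finset.Icc 1 d).filter
        (fun l => jIdx B Vn (pSeq B Vn (l - 1)) = jIdx B Vn (pSeq B Vn (k - 1))) :=
      Finset.mem_filter.mpr ⟨Finset.mem_Icc.mpr hk, rfl⟩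
    have hcard1 : 0 < ((Finset.Icc 1 d).filter
        (fun l => jIdx B Vn (pSeq B Vn (l - 1)) = jIdx B Vn (pSeq B Vn (k - 1)))).card :=
      Finset.card_pos.mpr ⟨k, hkmem⟩
    have hel := he_le _ hb.1 hb.2
    exact (hjump_iff_e _ hb.1 hb.2).mpr (by omega)
  · -- InjOn
    intro k hk k' hk' heq
    simp only [Set.mem_Icc] at hk hk'
    have hb := hJ_bounds k hk.1 hk.2
    have h1 := he_le _ hb.1 hb.2
    have hmem1 : k ∈ (Finset.Icc 1 d).filter
        (fun l => jIdx B Vn (pSeq B Vn (l - 1)) = jIdx B Vn (pSeq B Vn (k - 1))) :=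
      Finset.mem_filter.mpr ⟨Finset.mem_Icc.mpr hk, rfl⟩
    have hmem2 : k' ∈ (Finset.Icc 1 d).filter
        (fun l => jIdx B Vn (pSeq B Vn (l - 1)) = jIdx B Vn (pSeq B Vn (k - 1))) :=
      Finset.mem_filter.mpr ⟨Finset.mem_Icc.mpr hk', heq.symm⟩
    exact Finset.card_le_one.mp h1 k hmem1 k' hmem2
  · -- SurjOn
    intro j hj
    obtain ⟨h1, h2, hnle⟩ := hj
    have he := (hjump_iff_e j h1 h2).mp ⟨h1, h2, hnle⟩
    have hne : ((Finset.Icc 1 d).filter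
        (fun l => jIdx B Vn (pSeq B Vn (l - 1)) = j)).Nonempty :=
      Finset.card_pos.mp (by omega)
    obtain ⟨k, hk⟩ := hne
    obtain ⟨hk1, hk2⟩ := Finset.mem_filter.mp hk
    exact ⟨k, Set.mem_Icc.mpr (Finset.mem_Icc.mp hk1), hk2⟩
end
end

section
/- With V, the complete flag {0} = V₀ ⊊ ⋯ ⊊ V_m = V, B ∈ (∧²V)* ∖ {0}, d := (1/2)·dim(V/N(B)), and p(B) := N(B₁) + ⋯ + N(B_m) where B_j := B|_{V_j × V_j}: if 1 ≤ r₁ < ⋯ < r_{m−d} < r_{m−d+1} = m + 1 are determined by {1, …, m} ∖ jump p(B) = {r₁, …, r_{m−d}}, then (i) 2ℓ − j ≥ 0 whenever r_ℓ ≤ j < r_{ℓ+1} for ℓ = 1, …, m − d; and (ii) dim N(B_j) = j if 1 ≤ j < r₁, and dim N(B_j) = 2ℓ − j if r_ℓ ≤ j < r_{ℓ+1} for ℓ = 1, …, m − d. -/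
open Module Filter Topology

noncomputable section

variable {𝕜 : Type} [RCLike 𝕜]

variable {V : Type} [NormedAddCommGroup V] [InnerProductSpace 𝕜 V] [FiniteDimensional 𝕜 V]

section AuxLemmas

lemma auxMemPerpB {B : V →L[𝕜] V →L[𝕜] 𝕜} {S : Submodule 𝕜 V} {x : V} :
    x ∈ perpB B S ↔ ∀ v ∈ S, B v x = 0 := Iff.rfl

lemma auxMemNullIn {B : V →L[𝕜] V →L[𝕜] 𝕜} {W : Submodule 𝕜 V} {x : V} :
    x ∈ nullIn B W ↔ (∀ v ∈ W, B v x = 0) ∧ x ∈ W := Iff.rfl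

lemma auxNullInLe {B : V →L[𝕜] V →L[𝕜] 𝕜} {W : Submodule 𝕜 V} : nullIn B W ≤ W :=
  inf_le_right

lemma auxSkewSelf {B : V →L[𝕜] V →L[𝕜] 𝕜} (hB : IsSkew B) (u : V) : B u u = 0 := by
  have h := hB u u
  have h2 : (2 : 𝕜) * B u u = 0 := by linear_combination h
  rcases mul_eq_zero.mp h2 with h3 | h3
  · exact absurd h3 two_ne_zero
  · exact h3

/-- Parity: the rank of a skew form restricted to a subspace is even. -/
lemma auxParity (B : V →L[𝕜] V →L[𝕜] 𝕜) (hB : IsSkew B) :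
    ∀ n (W : Submodule 𝕜 V), finrank 𝕜 W ≤ n →
      ∃ k, finrank 𝕜 W = finrank 𝕜 (nullIn B W) + 2 * k := by
  intro n
  induction n with
  | zero =>
    intro W hW
    refine ⟨0, ?_⟩
    have h1 : finrank 𝕜 (nullIn B W) ≤ finrank 𝕜 W := Submodule.finrank_mono auxNullInLe
    omega
  | succ n ih =>
    intro W hW
    by_cases hz : ∀ u ∈ W, ∀ v ∈ W, B u v = 0
    · refine ⟨0, ?_⟩
      have : nullIn B W = W :=
        le_antisymm auxNullInLe (fun x hx => ⟨fun v hv => hz v hv x hx, hx⟩)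
      rw [this]; ring
    · push_neg at hz
      obtain ⟨u, hu, v0, hv0, hBuv0⟩ := hz
      set v : V := (B u v0)⁻¹ • v0 with hv_def
      have hv : v ∈ W := W.smul_mem _ hv0
      have hBuv : B u v = 1 := by
        simp [hv_def, map_smul, inv_mul_cancel₀ hBuv0]
      have hBvu : B v u = -1 := by rw [hB v u, hBuv]
      have hBuu : B u u = 0 := auxSkewSelf hB u
      have hBvv : B v v = 0 := auxSkewSelf hB v
      set U : Submodule 𝕜 V := Submodule.span 𝕜 {u, v} with hU_def
      set W₂ : Submodule 𝕜 V := W ⊓ LinearMap.ker (B u).toLinearMap ⊓ LinearMap.ker (B v).toLinearMap with hW2_def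
      have hmemW₂ : ∀ x, x ∈ W₂ ↔ x ∈ W ∧ B u x = 0 ∧ B v x = 0 := by
        intro x
        simp [hW2_def, Submodule.mem_inf, LinearMap.mem_ker, and_assoc]
      have hdecomp : ∀ w ∈ W, w ∈ W₂ ⊔ U := by
        intro w hw
        have hw' : w + (B v w) • u - (B u w) • v ∈ W₂ := by
          rw [hmemW₂]
          refine ⟨by exact W.sub_mem (W.add_mem hw (W.smul_mem _ hu)) (W.smul_mem _ hv), ?_, ?_⟩
          · simp [map_add, map_sub, map_smul, hBuu, hBuv]
          · simp [map_add, map_sub, map_smul, hBvu, hBvv]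
        have : w = (w + (B v w) • u - (B u w) • v) + ((- (B v w)) • u + (B u w) • v) := by
          module
        rw [this]
        exact Submodule.add_mem _ (Submodule.mem_sup_left hw')
          (Submodule.mem_sup_right (Submodule.add_mem _
            (Submodule.smul_mem _ _ (Submodule.subset_span (by simp)))
            (Submodule.smul_mem _ _ (Submodule.subset_span (by simp)))))
      have hUW : U ≤ W := Submodule.span_le.mpr (by
        intro x hx; rcases hx with h | h
        · subst h; exact hu
        · simp at h; subst h; exact hv)
      have hWeq : W = W₂ ⊔ U := by
        refine le_antisymm (fun w hw => hdecomp w hw) (sup_le (by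
          intro x hx; exact ((hmemW₂ x).mp hx).1) hUW)
      have hdisj : W₂ ⊓ U = ⊥ := by
        rw [eq_bot_iff]
        intro x hx
        obtain ⟨hx2, hxU⟩ := Submodule.mem_inf.mp hx
        obtain ⟨a, b, hab⟩ := Submodule.mem_span_pair.mp hxU
        obtain ⟨-, hxu, hxv⟩ := (hmemW₂ x).mp hx2
        have hb : b = 0 := by
          have := hxu
          rw [← hab] at this
          simpa [map_add, map_smul, hBuu, hBuv] using this
        have ha : a = 0 := by
          have := hxv
          rw [← hab] at this
          simp [map_add, map_smul, hBvu, hBvv] at this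
          simpa [hb] using this
        simp [← hab, ha, hb]
      have huv_ne : u ≠ 0 := by rintro rfl; simp at hBuv
      have hv_ne : v ≠ 0 := by intro h; rw [h] at hBuv; simp at hBuv
      have hU2 : finrank 𝕜 U = 2 := by
        have hsp : U = Submodule.span 𝕜 {u} ⊔ Submodule.span 𝕜 {v} := by
          rw [hU_def, show ({u, v} : Set V) = insert u {v} from rfl, Submodule.span_insert]
        have hinf : Submodule.span 𝕜 ({u} : Set V) ⊓ Submodule.span 𝕜 {v} = ⊥ := by
          rw [eq_bot_iff]
          intro x hx
          obtain ⟨hxu, hxv⟩ := Submodule.mem_inf.mp hx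
          obtain ⟨a, ha⟩ := Submodule.mem_span_singleton.mp hxu
          obtain ⟨b, hb⟩ := Submodule.mem_span_singleton.mp hxv
          have h1 : B u x = 0 := by rw [← ha]; simp [map_smul, hBuu]
          have h2 : B u x = b := by rw [← hb]; simp [map_smul, hBuv]
          have hb0 : b = 0 := by rw [← h2, h1]
          simp [← hb, hb0]
        have := Submodule.finrank_sup_add_finrank_inf_eq
          (Submodule.span 𝕜 ({u} : Set V)) (Submodule.span 𝕜 {v})
        rw [hinf, finrank_span_singleton huv_ne, finrank_span_singleton hv_ne] at this
        rw [hsp]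
        simpa using this
      have hnull : nullIn B W = nullIn B W₂ := by
        apply le_antisymm
        · intro x hx
          obtain ⟨hperp, hxW⟩ := auxMemNullIn.mp hx
          have hxW₂ : x ∈ W₂ := (hmemW₂ x).mpr ⟨hxW, hperp u hu, hperp v hv⟩
          exact auxMemNullIn.mpr ⟨fun s hs => hperp s ((hmemW₂ s).mp hs).1, hxW₂⟩
        · intro x hx
          obtain ⟨hperp, hxW₂⟩ := auxMemNullIn.mp hx
          obtain ⟨hxW, hxu, hxv⟩ := (hmemW₂ x).mp hxW₂
          refine auxMemNullIn.mpr ⟨?_, hxW⟩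
          intro s hs
          have hs2 : s ∈ W₂ ⊔ U := hdecomp s hs
          obtain ⟨s₂, hs₂, t, htU, hst⟩ := Submodule.mem_sup.mp hs2
          obtain ⟨a, b, hab⟩ := Submodule.mem_span_pair.mp htU
          rw [← hst, ← hab]
          simp [map_add, map_smul, hperp s₂ hs₂, hxu, hxv]
      have hrankW : finrank 𝕜 W = finrank 𝕜 W₂ + 2 := by
        have := Submodule.finrank_sup_add_finrank_inf_eq W₂ U
        rw [hdisj, ← hWeq, hU2] at this
        simpa using this
      have hW₂n : finrank 𝕜 W₂ ≤ n := by omega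
      obtain ⟨k, hk⟩ := ih W₂ hW₂n
      exact ⟨k + 1, by rw [hrankW, hk, hnull]; ring⟩

lemma auxSupSpanEq {W' W : Submodule 𝕜 V} (h : W' ≤ W) {v : V} (hvW : v ∈ W)
    (hv : v ∉ W') (hr : finrank 𝕜 W ≤ finrank 𝕜 W' + 1) :
    W = W' ⊔ Submodule.span 𝕜 {v} := by
  have hvne : v ≠ 0 := fun h0 => hv (h0 ▸ W'.zero_mem)
  have hinf : W' ⊓ Submodule.span 𝕜 {v} = ⊥ := by
    rw [eq_bot_iff]
    intro x hx
    obtain ⟨hx1, hx2⟩ := Submodule.mem_inf.mp hx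
    obtain ⟨c, hc⟩ := Submodule.mem_span_singleton.mp hx2
    rcases eq_or_ne c 0 with h0 | h0
    · simp [← hc, h0]
    · rw [← hc] at hx1
      exact absurd ((Submodule.smul_mem_iff _ h0).mp hx1) hv
  have hsum := Submodule.finrank_sup_add_finrank_inf_eq W' (Submodule.span 𝕜 {v})
  rw [hinf, finrank_span_singleton hvne] at hsum
  simp only [finrank_bot, add_zero] at hsum
  refine (Submodule.eq_of_le_of_finrank_le
    (sup_le h (Submodule.span_le.mpr (by simpa using hvW))) ?_).symm
  omega

lemma auxStepDown (B : V →L[𝕜] V →L[𝕜] 𝕜) {W' W : Submodule 𝕜 V} (h : W' ≤ W)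
    (hr : finrank 𝕜 W ≤ finrank 𝕜 W' + 1) :
    finrank 𝕜 (nullIn B W) ≤ finrank 𝕜 (nullIn B W') + 1 := by
  have hle : nullIn B W ⊓ W' ≤ nullIn B W' := by
    intro x hx
    obtain ⟨hx1, hx2⟩ := Submodule.mem_inf.mp hx
    exact auxMemNullIn.mpr ⟨fun s hs => (auxMemNullIn.mp hx1).1 s (h hs), hx2⟩
  have hsum := Submodule.finrank_sup_add_finrank_inf_eq (nullIn B W) W'
  have hsuple : nullIn B W ⊔ W' ≤ W := sup_le auxNullInLe h
  have h1 : finrank 𝕜 ↥(nullIn B W ⊔ W') ≤ finrank 𝕜 W := Submodule.finrank_mono hsuple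
  have h2 : finrank 𝕜 (nullIn B W ⊓ W' : Submodule 𝕜 V) ≤ finrank 𝕜 (nullIn B W') :=
    Submodule.finrank_mono hle
  have h3 : finrank 𝕜 W' ≤ finrank 𝕜 W := Submodule.finrank_mono h
  omega

lemma auxStepUp (B : V →L[𝕜] V →L[𝕜] 𝕜) (hB : IsSkew B) {W' W : Submodule 𝕜 V}
    (h : W' ≤ W) {v : V} (hWeq : W = W' ⊔ Submodule.span 𝕜 {v}) :
    finrank 𝕜 (nullIn B W') ≤ finrank 𝕜 (nullIn B W) + 1 := by
  set φ : V →ₗ[𝕜] 𝕜 := (B.flip v : V →L[𝕜] 𝕜).toLinearMap with hφ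
  have hφ_apply : ∀ x, φ x = B x v := fun x => rfl
  set K : Submodule 𝕜 V := nullIn B W' ⊓ LinearMap.ker φ with hK
  have hKle : K ≤ nullIn B W := by
    intro x hx
    obtain ⟨hx1, hx2⟩ := Submodule.mem_inf.mp hx
    have hxv : B x v = 0 := by rw [← hφ_apply]; exact hx2
    refine auxMemNullIn.mpr ⟨?_, h (auxNullInLe hx1)⟩
    intro s hs
    rw [hWeq] at hs
    obtain ⟨s', hs', t, ht, hst⟩ := Submodule.mem_sup.mp hs
    obtain ⟨c, hc⟩ := Submodule.mem_span_singleton.mp ht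
    have hvx : B v x = 0 := by rw [hB v x, hxv]; ring
    rw [← hst, ← hc]
    simp [map_add, map_smul, (auxMemNullIn.mp hx1).1 s' hs', hvx]
  have hker : finrank 𝕜 V ≤ finrank 𝕜 (LinearMap.ker φ) + 1 := by
    have := φ.finrank_range_add_finrank_ker
    have hr1 : finrank 𝕜 (LinearMap.range φ) ≤ 1 :=
      (Submodule.finrank_le _).trans (le_of_eq (finrank_self 𝕜))
    omega
  have hsum := Submodule.finrank_sup_add_finrank_inf_eq (nullIn B W') (LinearMap.ker φ)
  have h1 : finrank 𝕜 ↥(nullIn B W' ⊔ LinearMap.ker φ) ≤ finrank 𝕜 V :=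
    Submodule.finrank_le _
  have h2 : finrank 𝕜 K ≤ finrank 𝕜 (nullIn B W) := Submodule.finrank_mono hKle
  rw [← hK] at hsum
  omega

end AuxLemmas

/-- With `2d = dim (V / N(B))` and `p(B) := N(B₁) + ⋯ + N(B_m)`, if
`1 ≤ r₁ < ⋯ < r_{m-d} < r_{m-d+1} = m + 1` enumerate `{1, …, m} ∖ jump p(B)`, then
(i) `2ℓ − j ≥ 0` whenever `r_ℓ ≤ j < r_{ℓ+1}` for `ℓ = 1, …, m − d`, and
(ii) `dim N(B_j) = j` if `1 ≤ j < r₁`, while `dim N(B_j) = 2ℓ − j` if `r_ℓ ≤ j < r_{ℓ+1}`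
for `ℓ = 1, …, m − d`. -/
theorem finrank_nullIn_of_jump_enumeration
    (m : ℕ) (hm : finrank 𝕜 V = m)
    (Vn : ℕ → Submodule 𝕜 V) (hV0 : Vn 0 = ⊥) (hmono : Monotone Vn)
    (hrank : ∀ j ≤ m, finrank 𝕜 (Vn j) = j) (htop : ∀ j, m ≤ j → Vn j = ⊤)
    (B : V →L[𝕜] V →L[𝕜] 𝕜) (hB : IsSkew B) (hB0 : B ≠ 0)
    (d : ℕ) (hd : 2 * d = finrank 𝕜 (V ⧸ nullSpace B))
    (r : ℕ → ℕ)
    (hr1 : 1 ≤ r 1)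
    (hrmono : StrictMonoOn r (Set.Icc 1 (m - d + 1)))
    (hrlast : r (m - d + 1) = m + 1)
    (hrenum : {j | 1 ≤ j ∧ j ≤ m} \ jumpSetN m Vn (lagSumN m Vn B) =
      r '' Set.Icc 1 (m - d)) :
    (∀ ℓ, 1 ≤ ℓ → ℓ ≤ m - d → ∀ j, r ℓ ≤ j → j < r (ℓ + 1) → j ≤ 2 * ℓ) ∧
    (∀ j, 1 ≤ j → j < r 1 → finrank 𝕜 (nullIn B (Vn j)) = j) ∧
    (∀ ℓ, 1 ≤ ℓ → ℓ ≤ m - d → ∀ j, r ℓ ≤ j → j < r (ℓ + 1) →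
      finrank 𝕜 (nullIn B (Vn j)) = 2 * ℓ - j) := by
    classical
  set Pred : ℕ → Prop := fun i =>
    finrank 𝕜 (nullIn B (Vn i)) = finrank 𝕜 (nullIn B (Vn (i - 1))) + 1 with hPred
  have hm1 : 1 ≤ m := by
    by_contra hcon
    push_neg at hcon
    have hm0 : m = 0 := by omega
    have hsub : Subsingleton V := Module.finrank_zero_iff.mp (by rw [hm, hm0])
    exact hB0 (by ext x; rw [Subsingleton.elim x (0 : V)]; simp)
  have hF0 : finrank 𝕜 (nullIn B (Vn 0)) = 0 := by
    have hb : nullIn B (Vn 0) = ⊥ := le_bot_iff.mp (by rw [← hV0]; exact auxNullInLe)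
    rw [hb]
    exact finrank_bot 𝕜 V
  have hstep_le : ∀ j, j + 1 ≤ m →
      finrank 𝕜 (nullIn B (Vn (j + 1))) ≤ finrank 𝕜 (nullIn B (Vn j)) + 1 := by
    intro j hj
    exact auxStepDown B (hmono (Nat.le_succ j))
      (by rw [hrank (j + 1) hj, hrank j (by omega)])
  have hexists_v : ∀ j, j + 1 ≤ m → ∃ v ∈ Vn (j + 1), v ∉ Vn j := by
    intro j hj
    rw [← SetLike.not_le_iff_exists]
    intro hle
    have := Submodule.finrank_mono hle
    rw [hrank (j + 1) hj, hrank j (by omega)] at this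
    omega
  have hstep_ge : ∀ j, j + 1 ≤ m →
      finrank 𝕜 (nullIn B (Vn j)) ≤ finrank 𝕜 (nullIn B (Vn (j + 1))) + 1 := by
    intro j hj
    obtain ⟨v, hv1, hv2⟩ := hexists_v j hj
    have hWeq := auxSupSpanEq (hmono (Nat.le_succ j)) hv1 hv2
      (by rw [hrank (j + 1) hj, hrank j (by omega)])
    exact auxStepUp B hB (hmono (Nat.le_succ j)) hWeq
  have hparity : ∀ j, j ≤ m → ∃ k, j = finrank 𝕜 (nullIn B (Vn j)) + 2 * k := by
    intro j hj
    obtain ⟨k, hk⟩ := auxParity B hB (finrank 𝕜 (Vn j)) (Vn j) le_rfl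
    rw [hrank j hj] at hk
    exact ⟨k, hk⟩
  have hdichot : ∀ j, j + 1 ≤ m →
      (finrank 𝕜 (nullIn B (Vn (j + 1))) = finrank 𝕜 (nullIn B (Vn j)) + 1 ∨
        finrank 𝕜 (nullIn B (Vn j)) = finrank 𝕜 (nullIn B (Vn (j + 1))) + 1) := by
    intro j hj
    obtain ⟨k1, hk1⟩ := hparity j (by omega)
    obtain ⟨k2, hk2⟩ := hparity (j + 1) hj
    have h1 := hstep_le j hj
    have h2 := hstep_ge j hj
    omega
  have hcount : ∀ j, j ≤ m →
      finrank 𝕜 (nullIn B (Vn j)) + j = 2 * ((Finset.Icc 1 j).filter Pred).card := by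
    intro j
    induction j with
    | zero => intro _; simp [hF0]
    | succ j ih =>
      intro hj
      have ihj := ih (by omega)
      have hins : Finset.Icc 1 (j + 1) = insert (j + 1) (Finset.Icc 1 j) := by
        ext x; simp only [Finset.mem_Icc, Finset.mem_insert]; omega
      have hnm : (j + 1) ∉ (Finset.Icc 1 j).filter Pred := by
        intro h
        have := Finset.mem_Icc.mp (Finset.filter_subset Pred _ h)
        omega
      rw [hins, Finset.filter_insert]
      rcases hdichot j hj with hcase | hcase
      · rw [if_pos (show Pred (j + 1) from hcase), Finset.card_insert_of_notMem hnm]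
        omega
      · rw [if_neg (show ¬ Pred (j + 1) from fun hp => by
          have hp' : finrank 𝕜 (nullIn B (Vn (j + 1))) =
              finrank 𝕜 (nullIn B (Vn j)) + 1 := hp
          omega)]
        omega
  have hVm : Vn m = ⊤ := htop m le_rfl
  have hnullm : nullIn B (Vn m) = nullSpace B := by
    rw [hVm]
    simp [nullIn, nullSpace]
  have hFm : finrank 𝕜 (nullIn B (Vn m)) + 2 * d = m := by
    have hq := Submodule.finrank_quotient_add_finrank (nullSpace B : Submodule 𝕜 V)
    rw [hnullm]
    rw [hm] at hq
    omega
  set A := (Finset.Icc 1 m).filter Pred with hA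
  have hAc : A.card = m - d ∧ d ≤ m := by
    have h := hcount m le_rfl
    rw [← hA] at h
    constructor <;> omega
  have hinj : Set.InjOn r (Set.Icc 1 (m - d)) :=
    hrmono.injOn.mono (Set.Icc_subset_Icc le_rfl (by omega))
  set T := (Finset.Icc 1 (m - d)).image r with hT
  have hTcard : T.card = m - d := by
    rw [hT, Finset.card_image_of_injOn (by rw [Finset.coe_Icc]; exact hinj), Nat.card_Icc]
    omega
  have hScoe : {j | 1 ≤ j ∧ j ≤ m} \ jumpSetN m Vn (lagSumN m Vn B) = ↑T := by
    rw [hrenum, hT, Finset.coe_image, Finset.coe_Icc]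
  have hsubAT : A ⊆ T := by
    intro i hiA
    rw [hA, Finset.mem_filter, Finset.mem_Icc] at hiA
    obtain ⟨⟨hi1, him⟩, hinc⟩ := hiA
    have hiS : i ∈ {j | 1 ≤ j ∧ j ≤ m} \ jumpSetN m Vn (lagSumN m Vn B) := by
      refine ⟨⟨hi1, him⟩, ?_⟩
      intro hjump
      obtain ⟨-, -, hnle⟩ := hjump
      apply hnle
      have hinc' : finrank 𝕜 (nullIn B (Vn i)) =
          finrank 𝕜 (nullIn B (Vn (i - 1))) + 1 := hinc
      have hne : ¬ nullIn B (Vn i) ≤ Vn (i - 1) := by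
        intro hle
        have hle2 : nullIn B (Vn i) ≤ nullIn B (Vn (i - 1)) := by
          intro x hx
          exact auxMemNullIn.mpr
            ⟨fun s hs => (auxMemNullIn.mp hx).1 s (hmono (by omega : i - 1 ≤ i) hs), hle hx⟩
        have := Submodule.finrank_mono hle2
        omega
      obtain ⟨x, hx1, hx2⟩ := SetLike.not_le_iff_exists.mp hne
      have hWeq := auxSupSpanEq (hmono (by omega : i - 1 ≤ i)) (auxNullInLe hx1) hx2
        (by rw [hrank i him, hrank (i - 1) (by omega)]; omega)
      rw [hWeq]
      refine sup_le le_sup_left ?_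
      rw [Submodule.span_le]
      intro y hy
      rw [Set.mem_singleton_iff] at hy
      subst hy
      have hxlag : y ∈ lagSumN m Vn B := by
        have hle : nullIn B (Vn i) ≤ lagSumN m Vn B := by
          rw [lagSumN]
          exact Finset.single_le_sum (f := fun j => nullIn B (Vn j))
            (fun j _ => zero_le) (Finset.mem_Icc.mpr ⟨hi1, him⟩)
        exact hle hx1
      exact Submodule.mem_sup_right hxlag
    rw [hScoe] at hiS
    exact hiS
  have hAT : A = T := Finset.eq_of_subset_of_card_le hsubAT (by omega)
  have hF1 : finrank 𝕜 (nullIn B (Vn 1)) = 1 := by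
    have h1 : finrank 𝕜 (nullIn B (Vn 1)) ≤ finrank 𝕜 (nullIn B (Vn 0)) + 1 :=
      hstep_le 0 hm1
    obtain ⟨k, hk⟩ := hparity 1 hm1
    omega
  have h1A : (1 : ℕ) ∈ A := by
    rw [hA, Finset.mem_filter, Finset.mem_Icc]
    refine ⟨⟨le_rfl, hm1⟩, show finrank 𝕜 (nullIn B (Vn 1)) =
      finrank 𝕜 (nullIn B (Vn 0)) + 1 from by rw [hF1, hF0]⟩
  have hr1eq : r 1 = 1 := by
    have h1T : (1 : ℕ) ∈ T := hAT ▸ h1A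
    rw [hT, Finset.mem_image] at h1T
    obtain ⟨i, hi, hri⟩ := h1T
    rw [Finset.mem_Icc] at hi
    have hle : r 1 ≤ r i := hrmono.monotoneOn ⟨le_rfl, by omega⟩ ⟨hi.1, by omega⟩ hi.1
    omega
  have main : ∀ ℓ, 1 ≤ ℓ → ℓ ≤ m - d → ∀ j, r ℓ ≤ j → j < r (ℓ + 1) →
      finrank 𝕜 (nullIn B (Vn j)) + j = 2 * ℓ := by
    intro ℓ hℓ1 hℓ2 j hj1 hj2
    have hmemℓ : ℓ ∈ Set.Icc 1 (m - d + 1) := ⟨hℓ1, by omega⟩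
    have hmemℓ1 : ℓ + 1 ∈ Set.Icc 1 (m - d + 1) := ⟨by omega, by omega⟩
    have hjm : j ≤ m := by
      have h := hrmono.monotoneOn hmemℓ1 ⟨by omega, le_rfl⟩ (by omega : ℓ + 1 ≤ m - d + 1)
      rw [hrlast] at h
      omega
    have hjge1 : 1 ≤ j := by
      have h := hrmono.monotoneOn ⟨le_rfl, by omega⟩ hmemℓ hℓ1
      omega
    have hfilter : (Finset.Icc 1 j).filter Pred = (Finset.Icc 1 ℓ).image r := by
      ext i
      rw [Finset.mem_filter, Finset.mem_Icc, Finset.mem_image]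
      constructor
      · rintro ⟨⟨hi1, hij⟩, hPi⟩
        have hiT : i ∈ T := by
          rw [← hAT, hA, Finset.mem_filter, Finset.mem_Icc]
          exact ⟨⟨hi1, by omega⟩, hPi⟩
        rw [hT, Finset.mem_image] at hiT
        obtain ⟨t, ht, hti⟩ := hiT
        rw [Finset.mem_Icc] at ht
        refine ⟨t, Finset.mem_Icc.mpr ⟨ht.1, ?_⟩, hti⟩
        by_contra hcon
        have hge : r (ℓ + 1) ≤ r t :=
          hrmono.monotoneOn hmemℓ1 ⟨by omega, by omega⟩ (by omega)
        omega
      · rintro ⟨t, ht, rfl⟩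
        rw [Finset.mem_Icc] at ht
        have htmem : t ∈ Set.Icc 1 (m - d + 1) := ⟨ht.1, by omega⟩
        have h1 : r t ≤ r ℓ := hrmono.monotoneOn htmem hmemℓ ht.2
        have h2 : r 1 ≤ r t := hrmono.monotoneOn ⟨le_rfl, by omega⟩ htmem ht.1
        have hrtA : r t ∈ A := by
          rw [hAT, hT]
          exact Finset.mem_image_of_mem r (Finset.mem_Icc.mpr ⟨ht.1, by omega⟩)
        rw [hA, Finset.mem_filter] at hrtA
        exact ⟨⟨by omega, by omega⟩, hrtA.2⟩
    have hinjℓ : Set.InjOn r ↑(Finset.Icc 1 ℓ) := by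
      rw [Finset.coe_Icc]
      exact hrmono.injOn.mono (Set.Icc_subset_Icc le_rfl (by omega))
    have hcard2 : ((Finset.Icc 1 j).filter Pred).card = ℓ := by
      rw [hfilter, Finset.card_image_of_injOn hinjℓ, Nat.card_Icc]
      omega
    have hc := hcount j hjm
    rw [hcard2] at hc
    exact hc
  refine ⟨?_, ?_, ?_⟩
  · intro ℓ h1 h2 j hj1 hj2
    have := main ℓ h1 h2 j hj1 hj2
    omega
  · intro j h1 h2
    omega
  · intro ℓ h1 h2 j hj1 hj2
    have := main ℓ h1 h2 j hj1 hj2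
    omega
end
end
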